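/- arXiv:1703.04486 — 12 statements merged into one kernel-verified Lean document; each statement's English description precedes it below -/
import Mathlib

section
/- Let L be a finite lattice with coatoms a_1,...,a_n, and let m : B_n → L be the map from the Boolean lattice of subsets of {1,...,n} defined by m(∅) = ⊤ and m(I) = ⋀_{i∈I} a_i for I nonempty. Then for every a ∈ L, the Möbius function satisfies μ(a, ⊤) = ∑_{I : m(I) = a} (-1)^{|I|}. -/
open Finset in
open scoped Classical in
/-- Crosscut theorem: for a finite lattice `L` with coatoms `a 1, ..., a n`,
and `m : Finset (Fin n) → L`, `m I = ⋀_{i ∈ I} a i` (so `m ∅ = ⊤`),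
the Möbius function satisfies `μ(x, ⊤) = ∑_{I : m I = x} (-1)^{|I|}`. -/
theorem stmt0 {L : Type*} [Lattice L] [OrderTop L] [Fintype L] [DecidableEq L]
    (μ : L → L → ℤ)
    (hμ_self : ∀ x : L, μ x x = 1)
    (hμ_lt : ∀ x y : L, x < y →
      μ x y = -∑ c ∈ Finset.univ.filter (fun c => x < c ∧ c ≤ y), μ c y)
    (n : ℕ) (a : Fin n → L)
    (ha_inj : Function.Injective a)
    (ha_coatoms : ∀ x : L, IsCoatom x ↔ ∃ i, a i = x)
    (x : L) :
    μ x ⊤ = ∑ I ∈ Finset.univ.filter (fun I : Finset (Fin n) => I.inf a = x),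
      (-1 : ℤ) ^ I.card := by
  set F : L → ℤ := fun c => ∑ I ∈ Finset.univ.filter
      (fun I : Finset (Fin n) => I.inf a = c), (-1 : ℤ) ^ I.card with hF
  -- Key combinatorial identity
  have keyA : ∀ y : L, ∑ c ∈ Finset.univ.filter (fun c => y ≤ c), F c
      = if y = ⊤ then 1 else 0 := by
    intro y
    have h1 : ∑ c ∈ Finset.univ.filter (fun c => y ≤ c), F c
        = ∑ I ∈ Finset.univ.filter (fun I : Finset (Fin n) => y ≤ I.inf a),
            (-1 : ℤ) ^ I.card := by
      rw [← Finset.sum_fiberwise_of_maps_to (g := fun I : Finset (Fin n) => I.inf a)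
        (t := Finset.univ.filter (fun c => y ≤ c)) (fun I hI => by
          simp only [Finset.mem_filter, Finset.mem_univ, true_and] at hI ⊢
          exact hI)]
      refine Finset.sum_congr rfl fun c hc => ?_
      simp only [Finset.mem_filter, Finset.mem_univ, true_and] at hc
      refine Finset.sum_congr ?_ fun _ _ => rfl
      ext I
      show _ ↔ _
      simp only [Finset.mem_filter, Finset.mem_univ, true_and]
      exact ⟨fun h => ⟨h ▸ hc, h⟩, fun h => h.2⟩
    rw [h1]
    set S : Finset (Fin n) := Finset.univ.filter (fun i => y ≤ a i) with hS
    have h2 : Finset.univ.filter (fun I : Finset (Fin n) => y ≤ I.inf a) = S.powerset := by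
      ext I
      show _ ↔ _
      simp only [Finset.mem_filter, Finset.mem_univ, true_and, Finset.mem_powerset,
        Finset.le_inf_iff, hS, Finset.subset_iff]
    rw [h2, Finset.sum_powerset_neg_one_pow_card]
    congr 1
    simp only [eq_iff_iff]
    constructor
    · intro hSe
      by_contra hy
      rcases (eq_top_or_exists_le_coatom y).resolve_left hy with ⟨c, hc, hyc⟩
      rcases (ha_coatoms c).1 hc with ⟨i, hi⟩
      have : i ∈ S := by simp [hS, hi ▸ hyc]
      simp [hSe] at this
    · rintro rfl
      ext i
      simp only [hS, Finset.mem_filter, Finset.mem_univ, true_and, Finset.notMem_empty,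
        iff_false, top_le_iff]
      intro h
      exact ((ha_coatoms (a i)).2 ⟨i, rfl⟩).1 h
  -- main induction
  have main : ∀ x : L, μ x ⊤ = F x := by
    intro x
    induction x using WellFoundedGT.induction with
    | _ x ih =>
      rcases eq_or_lt_of_le (le_top (a := x)) with rfl | hlt
      · have := keyA ⊤
        have hfilt : Finset.univ.filter (fun c => (⊤ : L) ≤ c) = {⊤} := by
          ext c; simp [top_le_iff, eq_comm]
        rw [hfilt, Finset.sum_singleton, if_pos rfl] at this
        rw [hμ_self, this]
      · have hsplit : Finset.univ.filter (fun c => x ≤ c)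
            = insert x (Finset.univ.filter (fun c => x < c)) := by
          ext c
          simp only [Finset.mem_filter, Finset.mem_univ, true_and, Finset.mem_insert]
          rw [le_iff_lt_or_eq]
          tauto
        have hx : x ∉ Finset.univ.filter (fun c => x < c) := by simp
        have := keyA x
        rw [hsplit, Finset.sum_insert hx, if_neg (ne_top_of_lt hlt)] at this
        have hsum : ∑ c ∈ Finset.univ.filter (fun c => x < c), F c
            = ∑ c ∈ Finset.univ.filter (fun c => x < c), μ c ⊤ :=
          Finset.sum_congr rfl fun c hc => by
            simp only [Finset.mem_filter, Finset.mem_univ, true_and] at hc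
            exact (ih c hc).symm
        have hfilt2 : Finset.univ.filter (fun c => x < c ∧ c ≤ ⊤)
            = Finset.univ.filter (fun c => x < c) := by
          ext c; simp
        rw [hμ_lt x ⊤ hlt, hfilt2, ← hsum]
        linarith
  exact main x
end

section
/- A finite lattice is Boolean if and only if it is uniquely atomistic, i.e., every element can be written in exactly one way as a join of a set of atoms. -/
/-!
An element `x` of a finite lattice is represented by the set `atomsBelow x` of atoms below it.
In a Boolean lattice atoms are sup-prime, so an atom lies below a join of atoms only if it is one
of them, and complements force every `x` to be the join of `atomsBelow x`: together this is unique
atomisticity. Conversely, unique atomisticity says exactly that `atomsBelow` is a bijection between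
the lattice and the sets of atoms, and then it carries joins to unions and meets to intersections,
so the lattice inherits distributivity and complements from the power set of its atoms.
-/

open Finset Function

section Atoms

variable {α : Type*}

theorem IsAtom.supIrred [SemilatticeSup α] [OrderBot α] {a : α} (ha : IsAtom a) :
    SupIrred a := by
  refine ⟨fun hmin => ha.1 (hmin.eq_bot), fun b c hbc => ?_⟩
  rcases ha.le_iff.mp (hbc ▸ le_sup_left : b ≤ a) with rfl | hb
  · exact Or.inr (by rwa [bot_sup_eq] at hbc)
  · exact Or.inl hb

theorem IsAtom.supPrime [DistribLattice α] [OrderBot α] {a : α} (ha : IsAtom a) : SupPrime a :=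
  ha.supIrred.supPrime

end Atoms

section AtomsBelow

variable {α : Type*} [Lattice α] [OrderBot α] [Fintype α]

open Classical in
noncomputable def atomsBelow (x : α) : Finset α :=
  {a | IsAtom a ∧ a ≤ x}

@[simp]
theorem mem_atomsBelow {x a : α} : a ∈ atomsBelow x ↔ IsAtom a ∧ a ≤ x := by
  simp [atomsBelow]

theorem sup_atomsBelow_le (x : α) : (atomsBelow x).sup id ≤ x :=
  Finset.sup_le fun _ ha => (mem_atomsBelow.mp ha).2

theorem atomsBelow_inf [DecidableEq α] (x y : α) :
    atomsBelow (x ⊓ y) = atomsBelow x ∩ atomsBelow y := by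
  ext a
  simp only [mem_atomsBelow, mem_inter, le_inf_iff]
  tauto

theorem uniquelyAtomistic_iff :
    (∀ x : α, ∃! S : Finset α, (∀ s ∈ S, IsAtom s) ∧ x = S.sup id) ↔
      (∀ x : α, (atomsBelow x).sup id = x) ∧
        ∀ S : Finset α, (∀ s ∈ S, IsAtom s) → atomsBelow (S.sup id) = S := by
  have atoms_atomsBelow (x : α) : ∀ s ∈ atomsBelow x, IsAtom s :=
    fun _ hs => (mem_atomsBelow.mp hs).1
  constructor
  · intro hU
    have hsup (x : α) : (atomsBelow x).sup id = x := by
      obtain ⟨S, ⟨hS, rfl⟩, -⟩ := hU x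
      refine (sup_atomsBelow_le _).antisymm (Finset.sup_mono fun s hs => ?_)
      exact mem_atomsBelow.mpr ⟨hS s hs, le_sup (f := id) hs⟩
    refine ⟨hsup, fun S hS => ?_⟩
    exact (hU (S.sup id)).unique ⟨atoms_atomsBelow _, (hsup _).symm⟩ ⟨hS, rfl⟩
  · rintro ⟨hsup, hatoms⟩ x
    refine ⟨atomsBelow x, ⟨atoms_atomsBelow x, (hsup x).symm⟩, ?_⟩
    rintro S ⟨hS, rfl⟩
    exact (hatoms S hS).symm

end AtomsBelow

section Boolean

variable {α : Type*} [Fintype α]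

theorem atomsBelow_finset_sup [DistribLattice α] [OrderBot α] {S : Finset α}
    (hS : ∀ s ∈ S, IsAtom s) : atomsBelow (S.sup id) = S := by
  ext a
  refine ⟨fun ha => ?_, fun ha => mem_atomsBelow.mpr ⟨hS a ha, le_sup (f := id) ha⟩⟩
  obtain ⟨haS, hle⟩ := mem_atomsBelow.mp ha
  obtain ⟨s, hs, has⟩ := haS.supPrime.le_finset_sup.mp hle
  rcases (hS s hs).le_iff.mp has with h | rfl
  · exact absurd h haS.1
  · exact hs

theorem sup_atomsBelow [DistribLattice α] [BoundedOrder α] [ComplementedLattice α] (x : α) :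
    (atomsBelow x).sup id = x := by
  refine (sup_atomsBelow_le x).antisymm ?_
  obtain ⟨c, hc⟩ := exists_isCompl ((atomsBelow x).sup id)
  -- an atom below `x ⊓ c` would lie below `(atomsBelow x).sup id ⊓ c = ⊥`
  have hxc : Disjoint x c := by
    rw [disjoint_iff]
    by_contra hne
    obtain ⟨a, ha, hale⟩ := (eq_bot_or_exists_atom_le (x ⊓ c)).resolve_left hne
    have hmem : a ∈ atomsBelow x := mem_atomsBelow.mpr ⟨ha, hale.trans inf_le_left⟩
    exact ha.1 (le_bot_iff.mp ((le_inf (le_sup (f := id) hmem) (hale.trans inf_le_right)).trans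
      hc.1.le_bot))
  exact hxc.le_of_codisjoint hc.2.symm

end Boolean

section RepresentedByAtoms

variable {α : Type*} [Lattice α] [OrderBot α] [Fintype α]
  (hsup : ∀ x : α, (atomsBelow x).sup id = x)
  (hatoms : ∀ S : Finset α, (∀ s ∈ S, IsAtom s) → atomsBelow (S.sup id) = S)
include hsup

theorem atomsBelow_injective : Injective (atomsBelow : α → Finset α) :=
  LeftInverse.injective (g := fun S : Finset α => S.sup id) hsup

include hatoms

theorem atomsBelow_sup [DecidableEq α] (x y : α) :
    atomsBelow (x ⊔ y) = atomsBelow x ∪ atomsBelow y := by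
  have hunion : ∀ s ∈ atomsBelow x ∪ atomsBelow y, IsAtom s := by
    simp only [mem_union, mem_atomsBelow]
    rintro s (h | h) <;> exact h.1
  rw [← hatoms _ hunion, sup_union, hsup, hsup]

theorem inf_sup_left_of_atomsBelow (x y z : α) : x ⊓ (y ⊔ z) = x ⊓ y ⊔ x ⊓ z := by
  classical
  apply atomsBelow_injective hsup
  simp only [atomsBelow_inf, atomsBelow_sup hsup hatoms, inter_union_distrib_left]

theorem exists_complement_of_atomsBelow [OrderTop α] (x : α) :
    ∃ y : α, x ⊓ y = ⊥ ∧ x ⊔ y = ⊤ := by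
  classical
  set D := atomsBelow ⊤ \ atomsBelow x
  have hD : atomsBelow (D.sup id) = D :=
    hatoms D fun s hs => (mem_atomsBelow.mp (mem_sdiff.mp hs).1).1
  refine ⟨D.sup id, ?_, atomsBelow_injective hsup ?_⟩
  · rw [← hsup (x ⊓ _), atomsBelow_inf, hD, inter_sdiff_self, sup_empty]
  · rw [atomsBelow_sup hsup hatoms, hD, union_sdiff_of_subset]
    exact fun a ha => mem_atomsBelow.mpr ⟨(mem_atomsBelow.mp ha).1, le_top⟩

end RepresentedByAtoms

/-- A finite lattice is Boolean (distributive and complemented) if and only if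
it is uniquely atomistic: every element is the join of a unique set of atoms. -/
theorem stmt2 {L : Type*} [Lattice L] [BoundedOrder L] [Fintype L] :
    ((∀ x y z : L, x ⊓ (y ⊔ z) = (x ⊓ y) ⊔ (x ⊓ z)) ∧
      (∀ x : L, ∃ y : L, x ⊓ y = ⊥ ∧ x ⊔ y = ⊤)) ↔
    (∀ x : L, ∃! S : Finset L, (∀ s ∈ S, IsAtom s) ∧ x = S.sup id) := by
  rw [uniquelyAtomistic_iff]
  constructor
  · rintro ⟨hdistrib, hcompl⟩
    let _ : DistribLattice L := .ofInfSupLe fun x y z => (hdistrib x y z).le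
    have : ComplementedLattice L :=
      ⟨fun x => (hcompl x).imp fun _ h => ⟨disjoint_iff.mpr h.1, codisjoint_iff.mpr h.2⟩⟩
    exact ⟨sup_atomsBelow, fun _ => atomsBelow_finset_sup⟩
  · rintro ⟨hsup, hatoms⟩
    exact ⟨inf_sup_left_of_atomsBelow hsup hatoms, exists_complement_of_atomsBelow hsup hatoms⟩
end

section
/- For a finite group G, the Euler totient φ(G) := ∑_{H ≤ G} μ(H,G)·|H| equals the number of elements g ∈ G such that ⟨g⟩ = G. In particular, if φ(G) ≠ 0 then G is cyclic. -/
/-! Group the elements of `G` by the cyclic subgroup they generate: with `c K` the number of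
generators of the cyclic subgroup `K`, `|H| = ∑_{K ≤ H} c K`. Möbius inversion in the subgroup
lattice, evaluated at `⊤`, turns this into `∑_H μ(H, G) |H| = c ⊤`, the number of generators
of `G`. -/

open Finset

open scoped Classical

section MobiusTop

variable {α R : Type*} [PartialOrder α] [OrderTop α] [Fintype α]

theorem sum_filter_le_eq_ite_top [AddCommGroupWithOne R] {m : α → R} (hm_top : m ⊤ = 1)
    (hm_lt : ∀ H, H < ⊤ → m H = -∑ L ∈ univ.filter (H < ·), m L) (L : α) :
    ∑ H ∈ univ.filter (L ≤ ·), m H = if L = ⊤ then 1 else 0 := by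
  by_cases hL : L = ⊤
  · subst hL
    have : univ.filter ((⊤ : α) ≤ ·) = {⊤} := by ext H; simp
    rw [this, sum_singleton, hm_top, if_pos rfl]
  · have hsplit : univ.filter (L ≤ ·) = insert L (univ.filter (L < ·)) := by
      ext H; simp [le_iff_eq_or_lt, @eq_comm _ L]
    rw [hsplit, sum_insert (by simp), hm_lt L (lt_top_iff_ne_top.mpr hL), if_neg hL]
    abel

theorem sum_mul_eq_top_of_eq_sum_le [Ring R] {m : α → R} (hm_top : m ⊤ = 1)
    (hm_lt : ∀ H, H < ⊤ → m H = -∑ L ∈ univ.filter (H < ·), m L) {f c : α → R}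
    (hf : ∀ H, f H = ∑ K ∈ univ.filter (· ≤ H), c K) :
    ∑ H, m H * f H = c ⊤ :=
  calc ∑ H, m H * f H
      = ∑ H, ∑ K, if K ≤ H then m H * c K else 0 := by
        simp only [hf, mul_sum, sum_filter, mul_ite, mul_zero]
    _ = ∑ K, (∑ H ∈ univ.filter (K ≤ ·), m H) * c K := by
        rw [sum_comm]
        simp only [sum_filter, sum_mul, ite_mul, zero_mul]
    _ = c ⊤ := by simp [sum_filter_le_eq_ite_top hm_top hm_lt]

end MobiusTop

theorem Subgroup.card_eq_sum_card_zpowers_eq {G : Type*} [Group G] [Fintype G]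
    (H : Subgroup G) :
    Nat.card H =
      ∑ K ∈ univ.filter (· ≤ H), #(univ.filter fun g : G => Subgroup.zpowers g = K) := by
  rw [Nat.card_eq_fintype_card, Fintype.card_subtype,
    card_eq_sum_card_fiberwise (f := Subgroup.zpowers) (t := univ.filter (· ≤ H))
      (fun g hg => by simpa using hg)]
  refine sum_congr rfl fun K hK => congrArg card ?_
  ext g
  simp only [mem_filter, mem_univ, true_and] at hK ⊢
  exact ⟨And.right, fun hg => ⟨hK (hg ▸ Subgroup.mem_zpowers g), hg⟩⟩

open scoped Classical in
/-- Hall: the Euler totient `φ(G) = ∑_{H ≤ G} μ(H,G)|H|` of a finite group `G`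
counts the elements `g` with `⟨g⟩ = G`; in particular if `φ(G) ≠ 0` then `G`
is cyclic. -/
theorem stmt3 {G : Type*} [Group G] [Fintype G]
    (μ : Subgroup G → Subgroup G → ℤ)
    (hμ_self : ∀ H : Subgroup G, μ H H = 1)
    (hμ_lt : ∀ H K : Subgroup G, H < K →
      μ H K = -∑ L ∈ Finset.univ.filter (fun L : Subgroup G => H < L ∧ L ≤ K), μ L K) :
    (∑ H : Subgroup G, μ H ⊤ * (Nat.card H : ℤ)) =
      Nat.card {g : G // Subgroup.zpowers g = ⊤} ∧
    ((∑ H : Subgroup G, μ H ⊤ * (Nat.card H : ℤ)) ≠ 0 → IsCyclic G) := by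
  have htotient : (∑ H : Subgroup G, μ H ⊤ * (Nat.card H : ℤ)) =
      Nat.card {g : G // Subgroup.zpowers g = ⊤} := by
    rw [Nat.card_eq_fintype_card, Fintype.card_subtype]
    refine sum_mul_eq_top_of_eq_sum_le (m := (μ · ⊤))
      (c := fun K => (#(univ.filter fun g : G => Subgroup.zpowers g = K) : ℤ)) (hμ_self ⊤)
      (fun H hH => by simpa using hμ_lt H ⊤ hH) fun H => ?_
    exact_mod_cast Subgroup.card_eq_sum_card_zpowers_eq H
  refine ⟨htotient, fun hne => ?_⟩
  rw [htotient, Int.natCast_ne_zero, Nat.card_ne_zero] at hne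
  obtain ⟨⟨g, hg⟩⟩ := hne.1
  exact isCyclic_iff_exists_zpowers_eq_top.mpr ⟨g, hg⟩
end

section
/- A finite group G is cyclic if and only if φ(G) := ∑_{H ≤ G} μ(H,G)·|H| is nonzero. -/
open scoped Classical in
/-- A finite group `G` is cyclic iff `φ(G) = ∑_{H ≤ G} μ(H,G)|H|` is nonzero. -/
theorem stmt4 {G : Type*} [Group G] [Fintype G]
    (μ : Subgroup G → Subgroup G → ℤ)
    (hμ_self : ∀ H : Subgroup G, μ H H = 1)
    (hμ_lt : ∀ H K : Subgroup G, H < K →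
      μ H K = -∑ L ∈ Finset.univ.filter (fun L : Subgroup G => H < L ∧ L ≤ K), μ L K) :
    IsCyclic G ↔ (∑ H : Subgroup G, μ H ⊤ * (Nat.card H : ℤ)) ≠ 0 := by
  classical
  have key : ∀ K : Subgroup G,
      (∑ H ∈ Finset.univ.filter (fun H : Subgroup G => K ≤ H), μ H ⊤)
        = if K = ⊤ then 1 else 0 := by
    intro K
    by_cases hK : K = ⊤
    · subst hK
      rw [if_pos rfl]
      have h1 : Finset.univ.filter (fun H : Subgroup G => (⊤ : Subgroup G) ≤ H) = {⊤} := by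
        ext H; simp [top_le_iff, eq_comm]
      rw [h1, Finset.sum_singleton, hμ_self]
    · rw [if_neg hK]
      have hlt : K < ⊤ := lt_top_iff_ne_top.mpr hK
      have hsplit : Finset.univ.filter (fun H : Subgroup G => K ≤ H)
          = insert K (Finset.univ.filter (fun H : Subgroup G => K < H ∧ H ≤ ⊤)) := by
        ext H
        simp only [Finset.mem_filter, Finset.mem_univ, true_and, Finset.mem_insert, le_top,
          and_true]
        constructor
        · intro h
          rcases eq_or_ne K H with rfl | hne
          · exact Or.inl rfl
          · exact Or.inr (lt_of_le_of_ne h hne)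
        · rintro (rfl | h)
          · exact le_rfl
          · exact le_of_lt h
      have hK_notmem : K ∉ Finset.univ.filter (fun H : Subgroup G => K < H ∧ H ≤ ⊤) := by
        simp
      rw [hsplit, Finset.sum_insert hK_notmem, hμ_lt K ⊤ hlt, neg_add_cancel]
  have hcard : ∀ H : Subgroup G, (Nat.card H : ℤ) = ∑ g : G, if g ∈ H then 1 else 0 := by
    intro H
    rw [Finset.sum_boole, Nat.card_eq_fintype_card, Fintype.card_subtype]
  have hmain : (∑ H : Subgroup G, μ H ⊤ * (Nat.card H : ℤ))
      = ((Finset.univ.filter (fun g : G => Subgroup.zpowers g = ⊤)).card : ℤ) := by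
    calc ∑ H : Subgroup G, μ H ⊤ * (Nat.card H : ℤ)
        = ∑ H : Subgroup G, ∑ g : G, μ H ⊤ * (if g ∈ H then 1 else 0) := by
          simp only [hcard, Finset.mul_sum]
      _ = ∑ g : G, ∑ H : Subgroup G, μ H ⊤ * (if g ∈ H then 1 else 0) := Finset.sum_comm
      _ = ∑ g : G, ∑ H ∈ Finset.univ.filter (fun H : Subgroup G => Subgroup.zpowers g ≤ H),
            μ H ⊤ := by
          refine Finset.sum_congr rfl fun g _ => ?_
          rw [Finset.sum_filter]
          refine Finset.sum_congr rfl fun H _ => ?_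
          by_cases h : g ∈ H
          · rw [if_pos h, if_pos (Subgroup.zpowers_le.mpr h), mul_one]
          · rw [if_neg h, if_neg (fun hc => h (Subgroup.zpowers_le.mp hc)), mul_zero]
      _ = ∑ g : G, if Subgroup.zpowers g = ⊤ then 1 else 0 := by
          refine Finset.sum_congr rfl fun g _ => key _
      _ = _ := Finset.sum_boole _ _
  rw [hmain]
  rw [Ne, Int.natCast_eq_zero, Finset.card_eq_zero, ← Ne, ← Finset.nonempty_iff_ne_empty]
  constructor
  · rintro ⟨g, hg⟩
    exact ⟨g, Finset.mem_filter.mpr ⟨Finset.mem_univ _, (Subgroup.eq_top_iff' _).mpr fun x => hg x⟩⟩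
  · rintro ⟨g, hg⟩
    exact ⟨g, fun x => ((Subgroup.eq_top_iff' _).mp (Finset.mem_filter.mp hg).2) x⟩
end

section
/- For a cyclic group C_n of order n, the group Euler totient ∑_{H ≤ C_n} μ(H, C_n)·|H| equals the classical Euler totient φ(n). -/
open Finset Subgroup

open scoped Classical in
lemma aux_subgroup_eq_of_card_eq {G : Type*} [Group G] [Fintype G] [IsCyclic G]
    {H K : Subgroup G} (h : Nat.card H = Nat.card K) : H = K := by
  have key : ∀ L : Subgroup G, (L : Set G).toFinset =
      Finset.univ.filter (fun x : G => x ^ Nat.card L = 1) := by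
    intro L
    have hpos : 0 < Nat.card L := Nat.card_pos
    have h1 : ((L : Set G).toFinset).card = Nat.card L := by
      simp [Set.toFinset_card, Nat.card_eq_fintype_card]
    refine Finset.eq_of_subset_of_card_le ?_ ?_
    · intro x hx
      simp only [Set.mem_toFinset, SetLike.mem_coe] at hx
      simp only [Finset.mem_filter, Finset.mem_univ, true_and]
      exact orderOf_dvd_iff_pow_eq_one.mp (L.orderOf_dvd_natCard hx)
    · rw [h1]
      simpa [Nat.card_eq_fintype_card] using IsCyclic.card_pow_eq_one_le (α := G) (n := Nat.card L) hpos
  apply SetLike.ext'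
  have hK := key K
  rw [← h] at hK
  rw [← Set.coe_toFinset (H : Set G), ← Set.coe_toFinset (K : Set G), key H, hK]

open scoped Classical in
lemma aux_count {G : Type*} [Group G] [Fintype G] [IsCyclic G] (L : Subgroup G) :
    (Finset.univ.filter (fun g : G => Subgroup.zpowers g = L)).card
      = Nat.totient (Nat.card L) := by
  have hiff : ∀ g : G, Subgroup.zpowers g = L ↔ orderOf g = Nat.card L := by
    intro g
    constructor
    · rintro rfl; exact (Nat.card_zpowers g).symm
    · intro h; exact aux_subgroup_eq_of_card_eq (by rw [Nat.card_zpowers, h])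
  simp only [hiff]
  have hd : Nat.card L ∣ Fintype.card G := by
    rw [← Nat.card_eq_fintype_card]; exact L.card_subgroup_dvd_card
  exact IsCyclic.card_orderOf_eq_totient hd

open scoped Classical in
lemma aux_sum {G : Type*} [Group G] [Fintype G] [IsCyclic G] (H : Subgroup G) :
    Nat.card H = ∑ L ∈ Finset.univ.filter (fun L : Subgroup G => L ≤ H),
      Nat.totient (Nat.card L) := by
  have h1 : Nat.card H = ((H : Set G).toFinset).card := by
    simp [Set.toFinset_card, Nat.card_eq_fintype_card]
  rw [h1, Finset.card_eq_sum_card_fiberwise (f := fun g : G => Subgroup.zpowers g)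
    (t := Finset.univ.filter (fun L : Subgroup G => L ≤ H))
    (fun g hg => by
      simp only [Set.mem_toFinset, SetLike.mem_coe] at hg
      simp [Subgroup.zpowers_le.mpr hg])]
  refine Finset.sum_congr rfl fun L hL => ?_
  simp only [Finset.mem_filter, Finset.mem_univ, true_and] at hL
  rw [← aux_count L]
  congr 1
  ext g
  simp only [Finset.mem_filter, Set.mem_toFinset, SetLike.mem_coe, Finset.mem_univ, true_and]
  exact ⟨fun h => h.2, fun h => ⟨hL (h ▸ Subgroup.mem_zpowers g), h⟩⟩

open scoped Classical in
/-- For a cyclic group of order `n ≥ 1`, the group Euler totient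
`∑_{H ≤ G} μ(H,G)|H|` equals the classical Euler totient `φ(n)`. -/
theorem stmt5 {G : Type*} [Group G] [Fintype G] [IsCyclic G]
    (n : ℕ) (hn : 1 ≤ n) (hcard : Nat.card G = n)
    (μ : Subgroup G → Subgroup G → ℤ)
    (hμ_self : ∀ H : Subgroup G, μ H H = 1)
    (hμ_lt : ∀ H K : Subgroup G, H < K →
      μ H K = -∑ L ∈ Finset.univ.filter (fun L : Subgroup G => H < L ∧ L ≤ K), μ L K) :
    (∑ H : Subgroup G, μ H ⊤ * (Nat.card H : ℤ)) = Nat.totient n := by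
  have hμ : ∀ L : Subgroup G,
      (∑ H ∈ Finset.univ.filter (fun H : Subgroup G => L ≤ H), μ H ⊤)
        = if L = ⊤ then 1 else 0 := by
    intro L
    by_cases hL : L = ⊤
    · subst hL
      rw [if_pos rfl]
      have : Finset.univ.filter (fun H : Subgroup G => ⊤ ≤ H) = {⊤} := by
        ext H; simp [top_le_iff, eq_comm]
      rw [this, Finset.sum_singleton, hμ_self]
    · rw [if_neg hL]
      have hlt : L < ⊤ := lt_of_le_of_ne le_top hL
      have hsplit : Finset.univ.filter (fun H : Subgroup G => L ≤ H)
          = insert L (Finset.univ.filter (fun H : Subgroup G => L < H ∧ H ≤ ⊤)) := by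
        ext H
        simp only [Finset.mem_filter, Finset.mem_univ, true_and, Finset.mem_insert]
        constructor
        · intro h
          rcases eq_or_lt_of_le h with h' | h'
          · exact Or.inl h'.symm
          · exact Or.inr ⟨h', le_top⟩
        · rintro (rfl | ⟨h, -⟩)
          · exact le_rfl
          · exact h.le
      rw [hsplit, Finset.sum_insert (by simp [lt_irrefl]), hμ_lt L ⊤ hlt]
      ring
  have step : ∀ H : Subgroup G, μ H ⊤ * (Nat.card H : ℤ)
      = ∑ L : Subgroup G,
          (if L ≤ H then (Nat.totient (Nat.card L) : ℤ) * μ H ⊤ else 0) := by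
    intro H
    rw [← Finset.sum_filter, ← Finset.sum_mul]
    rw [mul_comm]
    congr 1
    rw [aux_sum H, Nat.cast_sum]
  calc (∑ H : Subgroup G, μ H ⊤ * (Nat.card H : ℤ))
      = ∑ H : Subgroup G, ∑ L : Subgroup G,
          (if L ≤ H then (Nat.totient (Nat.card L) : ℤ) * μ H ⊤ else 0) := by
        exact Finset.sum_congr rfl fun H _ => step H
    _ = ∑ L : Subgroup G, ∑ H : Subgroup G,
          (if L ≤ H then (Nat.totient (Nat.card L) : ℤ) * μ H ⊤ else 0) :=
        Finset.sum_comm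
    _ = ∑ L : Subgroup G, (Nat.totient (Nat.card L) : ℤ) *
          (if L = ⊤ then 1 else 0) := by
        refine Finset.sum_congr rfl fun L _ => ?_
        rw [← hμ L, Finset.mul_sum, ← Finset.sum_filter]
    _ = (Nat.totient (Nat.card (⊤ : Subgroup G)) : ℤ) := by
        rw [Finset.sum_congr rfl (fun L _ => by rw [mul_ite, mul_one, mul_zero])]
        simp
    _ = Nat.totient n := by rw [Subgroup.card_top, hcard]
end

section
/- Let H ≤ G be finite groups and define φ(H,G) := ∑_{K ∈ [H,G]} μ(K,G)·|K:H|, where [H,G] is the lattice of intermediate subgroups. Then there exists g ∈ G with ⟨H, g⟩ = G (equivalently ⟨Hg⟩ = G, the subgroup generated by the coset Hg) if and only if φ(H,G) ≠ 0. -/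
/-!
Since `|H|·|K:H| = |K|` counts the elements of `K`, exchanging the order of summation gives
`|H|·φ(H,G) = ∑_{g ∈ G} ∑_{K ⊇ ⟨H,g⟩} μ(K,G)`. By the defining recursion of `μ` the inner sum is
`1` if `⟨H,g⟩ = G` and `0` otherwise, so `|H|·φ(H,G)` is the number of `g` with `⟨H,g⟩ = G`.
-/

open Finset

open scoped Classical in
theorem sum_Icc_moebius_eq_ite {α : Type*} [PartialOrder α] [Fintype α] (μ : α → α → ℤ)
    (hμ_self : ∀ a, μ a a = 1)
    (hμ_lt : ∀ a b, a < b → μ a b = -∑ c ∈ univ.filter (fun c => a < c ∧ c ≤ b), μ c b)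
    (a b : α) :
    ∑ c ∈ univ.filter (fun c => a ≤ c ∧ c ≤ b), μ c b = if a = b then 1 else 0 := by
  rcases eq_or_ne a b with rfl | hab
  · have : univ.filter (fun c => a ≤ c ∧ c ≤ a) = {a} := by
      ext c; simp [le_antisymm_iff, and_comm]
    simp [this, hμ_self]
  · rw [if_neg hab]
    by_cases hle : a ≤ b
    · have : univ.filter (fun c => a ≤ c ∧ c ≤ b) =
          insert a (univ.filter (fun c => a < c ∧ c ≤ b)) := by
        ext c; simp only [mem_filter, mem_univ, true_and, mem_insert, le_iff_eq_or_lt (a := a)]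
        constructor
        · rintro ⟨rfl | h, hc⟩ <;> simp_all
        · rintro (rfl | h) <;> simp_all
      rw [this, sum_insert (by simp), hμ_lt a b (lt_of_le_of_ne hle hab), neg_add_cancel]
    · exact sum_eq_zero fun c hc => absurd ((mem_filter.mp hc).2.elim le_trans) hle

open scoped Classical in
theorem sum_Ici_moebius_top_eq_ite {α : Type*} [PartialOrder α] [OrderTop α] [Fintype α]
    (μ : α → α → ℤ) (hμ_self : ∀ a, μ a a = 1)
    (hμ_lt : ∀ a b, a < b → μ a b = -∑ c ∈ univ.filter (fun c => a < c ∧ c ≤ b), μ c b)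
    (a : α) :
    ∑ c ∈ univ.filter (a ≤ ·), μ c ⊤ = if a = ⊤ then 1 else 0 := by
  simpa only [le_top, and_true] using sum_Icc_moebius_eq_ite μ hμ_self hμ_lt a ⊤

namespace Subgroup

variable {G : Type*} [Group G]

theorem card_mul_relIndex {H K : Subgroup G} (h : H ≤ K) :
    Nat.card H * H.relIndex K = Nat.card K := by
  rw [← relIndex_bot_left, ← relIndex_bot_left]
  exact relIndex_mul_relIndex _ _ _ bot_le h

theorem sup_zpowers_le_iff {H K : Subgroup G} {g : G} :
    H ⊔ zpowers g ≤ K ↔ H ≤ K ∧ g ∈ K := by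
  rw [sup_le_iff, zpowers_le]

open scoped Classical in
theorem card_mul_sum_moebius_relIndex [Fintype G] (H : Subgroup G)
    (μ : Subgroup G → Subgroup G → ℤ) (hμ_self : ∀ K : Subgroup G, μ K K = 1)
    (hμ_lt : ∀ K K' : Subgroup G, K < K' →
      μ K K' = -∑ L ∈ univ.filter (fun L : Subgroup G => K < L ∧ L ≤ K'), μ L K') :
    (Nat.card H : ℤ) * ∑ K ∈ univ.filter (H ≤ ·), μ K ⊤ * (H.relIndex K : ℤ) =
      #(univ.filter fun g : G => H ⊔ zpowers g = ⊤) := by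
  calc (Nat.card H : ℤ) * ∑ K ∈ univ.filter (H ≤ ·), μ K ⊤ * (H.relIndex K : ℤ)
      = ∑ K ∈ univ.filter (H ≤ ·), ∑ g : G, if g ∈ K then μ K ⊤ else 0 := by
        rw [mul_sum]
        refine sum_congr rfl fun K hK => ?_
        rw [← sum_filter, sum_const, nsmul_eq_mul, ← Fintype.card_subtype,
          ← Nat.card_eq_fintype_card, ← card_mul_relIndex (mem_filter.mp hK).2]
        push_cast
        ring
    _ = ∑ g : G, ∑ K ∈ univ.filter (H ⊔ zpowers g ≤ ·), μ K ⊤ := by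
        rw [sum_comm]
        refine sum_congr rfl fun g _ => ?_
        simp only [sum_filter, sup_zpowers_le_iff, ite_and]
    _ = #(univ.filter fun g : G => H ⊔ zpowers g = ⊤) := by
        simp only [sum_Ici_moebius_top_eq_ite μ hμ_self hμ_lt, sum_boole]

end Subgroup

open scoped Classical in
/-- For finite groups `H ≤ G`, with `φ(H,G) = ∑_{K ∈ [H,G]} μ(K,G)·|K:H|`,
there is `g ∈ G` with `⟨H, g⟩ = G` iff `φ(H,G) ≠ 0`. -/
theorem stmt6 {G : Type*} [Group G] [Fintype G] (H : Subgroup G)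
    (μ : Subgroup G → Subgroup G → ℤ)
    (hμ_self : ∀ K : Subgroup G, μ K K = 1)
    (hμ_lt : ∀ K K' : Subgroup G, K < K' →
      μ K K' = -∑ L ∈ Finset.univ.filter (fun L : Subgroup G => K < L ∧ L ≤ K'), μ L K') :
    (∃ g : G, H ⊔ Subgroup.zpowers g = ⊤) ↔
      (∑ K ∈ Finset.univ.filter (fun K : Subgroup G => H ≤ K),
        μ K ⊤ * (H.relIndex K : ℤ)) ≠ 0 := by
  have hH : (Nat.card H : ℤ) ≠ 0 := Nat.cast_ne_zero.mpr Nat.card_pos.ne'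
  rw [← mul_ne_zero_iff_left hH, Subgroup.card_mul_sum_moebius_relIndex H μ hμ_self hμ_lt,
    Nat.cast_ne_zero, card_ne_zero, filter_nonempty_iff]
  simp only [mem_univ, true_and]
end

section
/- If the subgroup lattice of a finite group G is Eulerian, then it is Boolean (equivalently, G is cyclic of square-free order). -/
/-!
In an Eulerian graded poset every interval `[a, b]` of length two has exactly two interior points,
since `1 = μ(a, b) = -(μ(b, b) + ∑_{a < x < b} μ(x, b)) = #(a, b) - 1`. In the subgroup lattice
`[1, S]` has length two whenever `|S| = pq` for primes `p, q`, so such an `S` has exactly two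
nontrivial proper subgroups. No group is the union of two proper subgroups, so some element lies
in neither and generates `S`: every subgroup of order `pq` is cyclic. For `p = q` this contradicts
the uniqueness of the subgroup of order `p` in a cyclic group, so `|G|` is squarefree.

In a group of squarefree order whose subgroups of order `pq` are cyclic, a normal subgroup `Q` of
prime order is central: an element of prime order `r ∣ [G : C_G(Q)]` would generate together with
`Q` a non-abelian subgroup of order `|Q| r`. Since `G` is a Z-group, `G'` is cyclic, so its
subgroups of prime order are normal in `G`, hence central. By Burnside's transfer theorem a central
Sylow `q`-subgroup has a normal complement, which contains `G'`; so no prime divides `|G'|`. An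
abelian group of squarefree order is cyclic.
-/

open Finset in
open scoped Classical in
theorem ncard_Ioo_eq_two_of_eulerian {α : Type*} [PartialOrder α] [Fintype α]
    (μ : α → α → ℤ) (hμ_self : ∀ a, μ a a = 1)
    (hμ_lt : ∀ a b, a < b → μ a b = -∑ x ∈ univ.filter (fun x => a < x ∧ x ≤ b), μ x b)
    (rk : α → ℕ) (hgraded : ∀ a b, a ⋖ b → rk b = rk a + 1)
    (hEulerian : ∀ a b, a ≤ b → μ a b = (-1) ^ (rk b - rk a))
    {a b : α} (hcov : ∀ x ∈ Set.Ioo a b, a ⋖ x ∧ x ⋖ b) (hne : (Set.Ioo a b).Nonempty) :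
    (Set.Ioo a b).ncard = 2 := by
  obtain ⟨x₀, hx₀⟩ := hne
  have hab : a < b := hx₀.1.trans hx₀.2
  have hrk : rk b = rk a + 2 := by
    have := hgraded _ _ (hcov x₀ hx₀).1
    have := hgraded _ _ (hcov x₀ hx₀).2
    omega
  set T := univ.filter (fun x => a < x ∧ x < b)
  have hT : Set.Ioo a b = T := by ext; simp [T]
  have hIoc : univ.filter (fun x => a < x ∧ x ≤ b) = insert b T := by
    ext x
    simp only [T, mem_filter, mem_univ, true_and, mem_insert]
    constructor
    · rintro ⟨hax, hxb⟩
      exact hxb.eq_or_lt.imp id (⟨hax, ·⟩)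
    · rintro (rfl | ⟨hax, hxb⟩)
      exacts [⟨hab, le_rfl⟩, ⟨hax, hxb.le⟩]
  have hμT : ∀ x ∈ T, μ x b = -1 := by
    intro x hx
    have hx' : x ∈ Set.Ioo a b := hT ▸ hx
    rw [hEulerian x b hx'.2.le, hgraded x b (hcov x hx').2, Nat.add_sub_cancel_left, pow_one]
  have hsum := hμ_lt a b hab
  rw [hIoc, sum_insert (by simp [T]), hμ_self, sum_congr rfl hμT, sum_const, nsmul_eq_mul,
    mul_neg_one, hEulerian a b hab.le, hrk, Nat.add_sub_cancel_left] at hsum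
  rw [hT, Set.ncard_coe_finset]
  have : (T.card : ℤ) = 2 := by linarith
  exact_mod_cast this

open Subgroup

theorem IsCyclic.eq_of_card_eq {α : Type*} [Group α] [Finite α] [IsCyclic α] {H K : Subgroup α}
    (h : Nat.card H = Nat.card K) : H = K := by
  classical
  have : Fintype α := Fintype.ofFinite α
  -- `x ^ d = 1` has at most `d` solutions in a cyclic group, so a subgroup of order `d` is
  -- exactly the set of these solutions.
  have key : ∀ H : Subgroup α, (H : Set α) = {a | a ^ Nat.card H = 1} := by
    intro H
    apply Set.eq_of_subset_of_ncard_le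
    · intro a ha
      exact orderOf_dvd_iff_pow_eq_one.mp (H.orderOf_dvd_natCard ha)
    · rw [Set.ncard_eq_toFinset_card', Set.toFinset_ofPred, ← Nat.card_coe_set_eq,
        SetLike.coe_sort_coe]
      exact IsCyclic.card_pow_eq_one_le Nat.card_pos
    · exact Set.toFinite _
  exact SetLike.coe_injective (by rw [key H, key K, h])

namespace Subgroup

variable {G : Type*} [Group G]

theorem isCyclic_of_Ioo_subset_pair {S L₁ L₂ : Subgroup G} (h₁ : L₁ < S) (h₂ : L₂ < S)
    (h : Set.Ioo ⊥ S ⊆ {L₁, L₂}) : IsCyclic S := by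
  obtain ⟨z, hzS, hz⟩ : ∃ z ∈ S, z ∉ L₁ ∧ z ∉ L₂ := by
    by_contra! hcover
    rcases SubgroupClass.subset_union.mp (fun z hz => or_iff_not_imp_left.mpr (hcover z hz))
      with hle | hle
    exacts [h₁.not_ge hle, h₂.not_ge hle]
  suffices hgen : zpowers z = S from hgen ▸ isCyclic_zpowers z
  refine (zpowers_le.mpr hzS).eq_of_not_lt fun hlt => ?_
  have hbot : ⊥ < zpowers z := bot_lt_iff_ne_bot.mpr fun hb =>
    hz.1 (by rw [zpowers_eq_bot.mp hb]; exact L₁.one_mem)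
  rcases h ⟨hbot, hlt⟩ with hL | hL
  exacts [hz.1 (hL ▸ mem_zpowers z), hz.2 ((Set.mem_singleton_iff.mp hL) ▸ mem_zpowers z)]

theorem isCyclic_of_ncard_Ioo_eq_two {S : Subgroup G} (h : (Set.Ioo ⊥ S).ncard = 2) :
    IsCyclic S := by
  obtain ⟨L₁, L₂, -, hIoo⟩ := Set.ncard_eq_two.mp h
  have hmem₁ : L₁ ∈ Set.Ioo ⊥ S := hIoo ▸ Set.mem_insert _ _
  have hmem₂ : L₂ ∈ Set.Ioo ⊥ S := hIoo ▸ Set.mem_insert_of_mem _ rfl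
  exact isCyclic_of_Ioo_subset_pair hmem₁.2 hmem₂.2 hIoo.subset

variable [Finite G]

theorem card_sup_of_normal_of_coprime {N H : Subgroup G} [N.Normal]
    (h : (Nat.card N).Coprime (Nat.card H)) :
    Nat.card ↥(N ⊔ H) = Nat.card N * Nat.card H := by
  refine le_antisymm ?_ (Nat.le_of_dvd Nat.card_pos
    (h.mul_dvd_of_dvd_of_dvd (card_dvd_of_le le_sup_left) (card_dvd_of_le le_sup_right)))
  rw [← SetLike.coe_sort_coe, normal_mul]
  exact Set.natCard_mul_le

theorem eq_of_le_of_card_eq_of_isCyclic {N H K : Subgroup G} [IsCyclic N] (hH : H ≤ N)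
    (hK : K ≤ N) (h : Nat.card H = Nat.card K) : H = K := by
  have := IsCyclic.eq_of_card_eq (H := H.subgroupOf N) (K := K.subgroupOf N) (by
    rw [Nat.card_congr (subgroupOfEquivOfLe hH).toEquiv,
      Nat.card_congr (subgroupOfEquivOfLe hK).toEquiv, h])
  rwa [subgroupOf_inj, inf_of_le_left hH, inf_of_le_left hK] at this

theorem normal_of_le_of_isCyclic {N H : Subgroup G} [N.Normal] [IsCyclic N] (hHN : H ≤ N) :
    H.Normal where
  conj_mem h hh g := by
    let f := (MulAut.conj g).toMonoidHom
    have hmapN : H.map f ≤ N := map_le_iff_le_comap.mpr fun x hx =>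
      ‹N.Normal›.conj_mem x (hHN hx) g
    have hcard : Nat.card (H.map f) = Nat.card H :=
      (Nat.card_congr (H.equivMapOfInjective f (MulAut.conj g).injective).toEquiv).symm
    rw [← eq_of_le_of_card_eq_of_isCyclic hmapN hHN hcard]
    exact mem_map_of_mem f hh

theorem covBy_of_card_eq_mul_prime {H K : Subgroup G} {p : ℕ} (hp : p.Prime) (hle : H ≤ K)
    (hcard : Nat.card K = Nat.card H * p) : H ⋖ K := by
  refine ⟨hle.lt_of_ne fun h => ?_, fun M hHM hMK => ?_⟩
  · rw [h, eq_comm, Nat.mul_eq_left Nat.card_pos.ne'] at hcard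
    exact hp.ne_one hcard
  · obtain ⟨d, hd⟩ := card_dvd_of_le hHM.le
    have hdp : d ∣ p := by
      have := card_dvd_of_le hMK.le
      rwa [hcard, hd, Nat.mul_dvd_mul_iff_left Nat.card_pos] at this
    rcases hp.eq_one_or_self_of_dvd d hdp with rfl | rfl
    · exact hHM.ne (eq_of_le_of_card_ge hHM.le (by rw [hd, mul_one]))
    · exact hMK.ne (eq_of_le_of_card_ge hMK.le (by rw [hd, hcard]))

section PrimeMul

variable {p q : ℕ} (hp : p.Prime) (hq : q.Prime) {S : Subgroup G} (hS : Nat.card S = p * q)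
include hp hq hS

theorem card_eq_or_card_eq_of_mem_Ioo {L : Subgroup G} (hL : L ∈ Set.Ioo ⊥ S) :
    Nat.card L = p ∨ Nat.card L = q := by
  obtain ⟨a, b, ha, hb, hab⟩ := Nat.dvd_mul.mp (hS ▸ card_dvd_of_le hL.2.le)
  rcases hp.eq_one_or_self_of_dvd a ha with rfl | rfl <;>
    rcases hq.eq_one_or_self_of_dvd b hb with rfl | rfl
  · exact absurd (card_eq_one.mp (by rw [← hab, one_mul])) hL.1.ne'
  · exact Or.inr (by rw [← hab, one_mul])
  · exact Or.inl (by rw [← hab, mul_one])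
  · exact absurd (eq_of_le_of_card_ge hL.2.le (by rw [hS, hab])) hL.2.ne

theorem bot_covBy_and_covBy_of_mem_Ioo {L : Subgroup G} (hL : L ∈ Set.Ioo ⊥ S) : ⊥ ⋖ L ∧ L ⋖ S := by
  rcases card_eq_or_card_eq_of_mem_Ioo hp hq hS hL with h | h
  · exact ⟨covBy_of_card_eq_mul_prime hp bot_le (by rw [h, card_bot, one_mul]),
      covBy_of_card_eq_mul_prime hq hL.2.le (by rw [hS, h])⟩
  · exact ⟨covBy_of_card_eq_mul_prime hq bot_le (by rw [h, card_bot, one_mul]),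
      covBy_of_card_eq_mul_prime hp hL.2.le (by rw [hS, h, mul_comm])⟩

theorem nonempty_Ioo_of_card_eq_prime_mul : (Set.Ioo ⊥ S).Nonempty := by
  have := Fact.mk hp
  obtain ⟨x, hx⟩ := exists_prime_orderOf_dvd_card' (G := S) p (hS ▸ dvd_mul_right p q)
  have hcard : Nat.card (zpowers (x : G)) = p := by rw [Nat.card_zpowers, orderOf_coe, hx]
  refine ⟨zpowers (x : G), bot_lt_iff_ne_bot.mpr fun h => ?_,
    (zpowers_le.mpr x.2).lt_of_ne fun h => ?_⟩
  · rw [h, card_bot] at hcard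
    exact hp.ne_one hcard.symm
  · rw [h, hS, Nat.mul_eq_left hp.ne_zero] at hcard
    exact hq.ne_one hcard

end PrimeMul

end Subgroup

section Squarefree

variable {G : Type*} [Group G] [Finite G]

theorem le_center_of_normal_of_card_prime (hG : Squarefree (Nat.card G))
    (hcyc : ∀ (S : Subgroup G) (p q : ℕ), p.Prime → q.Prime → Nat.card S = p * q → IsCyclic S)
    {Q : Subgroup G} [Q.Normal] (hQ : (Nat.card Q).Prime) : Q ≤ center G := by
  set C := centralizer (Q : Set G)
  suffices hC : C = ⊤ from centralizer_eq_top_iff_subset.mp hC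
  by_contra hC
  obtain ⟨r, hr, hrC⟩ := Nat.exists_prime_and_dvd (mt index_eq_one.mp hC)
  have hcop : (Nat.card C).Coprime C.index := (Nat.squarefree_mul_iff.mp (C.card_mul_index ▸ hG)).1
  have hrC' : ¬ r ∣ Nat.card C := fun h => hr.ne_one (Nat.eq_one_of_dvd_coprimes hcop h hrC)
  have := Fact.mk hr
  obtain ⟨y, hy⟩ := exists_prime_orderOf_dvd_card' r (hrC.trans C.index_dvd_card)
  have hyC : y ∉ C := fun h => hrC' (hy ▸ C.orderOf_dvd_natCard h)
  have := Fact.mk hQ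
  have : IsCyclic Q := isCyclic_of_prime_card rfl
  have hQC : Q ≤ C := Q.le_centralizer
  have hQr : (Nat.card Q).Coprime (Nat.card (zpowers y)) := by
    rw [Nat.card_zpowers, hy, Nat.coprime_primes hQ hr]
    rintro rfl
    exact hrC' (card_dvd_of_le hQC)
  have := hcyc _ _ _ hQ hr (by rw [card_sup_of_normal_of_coprime hQr, Nat.card_zpowers, hy])
  exact hyC (mem_centralizer_iff.mpr fun x hx =>
    setLike_mul_comm (mem_sup_left hx) (mem_sup_right (mem_zpowers y)))

open scoped IsMulCommutative in
theorem not_dvd_card_commutator_of_le_center (hG : Squarefree (Nat.card G)) {Q : Subgroup G}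
    (hQ : (Nat.card Q).Prime) (hQZ : Q ≤ center G) : ¬ Nat.card Q ∣ Nat.card (commutator G) := by
  have := Fact.mk hQ
  have hfact : (Nat.card G).factorization (Nat.card Q) = 1 :=
    le_antisymm (hG.natFactorization_le_one _)
      (hQ.factorization_pos_of_dvd Nat.card_pos.ne' (card_subgroup_dvd_card Q))
  let P : Sylow (Nat.card Q) G := Sylow.ofCard Q (by rw [hfact, pow_one])
  have hP : normalizer (P : Set G) ≤ centralizer (P : Set G) := by
    change normalizer (Q : Set G) ≤ centralizer (Q : Set G)
    rw [centralizer_eq_top_iff_subset.mpr hQZ]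
    exact le_top
  have : IsCyclic P := isCyclic_of_prime_card (p := Nat.card Q) rfl
  exact fun h => MonoidHom.not_dvd_card_ker_transferSylow P hP
    (h.trans (card_dvd_of_le (Abelianization.commutator_subset_ker _)))

theorem isCyclic_of_squarefree_of_forall_card_eq_prime_mul (hG : Squarefree (Nat.card G))
    (hcyc : ∀ (S : Subgroup G) (p q : ℕ), p.Prime → q.Prime → Nat.card S = p * q → IsCyclic S) :
    IsCyclic G := by
  have := IsZGroup.of_squarefree hG
  suffices h : commutator G = ⊥ by
    apply isCyclic_of_injective (Abelianization.of : G →* Abelianization G)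
    rw [← MonoidHom.ker_eq_bot_iff, Abelianization.ker_of, h]
  have := IsZGroup.isCyclic_commutator G
  rw [← card_eq_one]
  by_contra hne
  obtain ⟨q, hq, hqG'⟩ := Nat.exists_prime_and_dvd hne
  have := Fact.mk hq
  obtain ⟨x, hx⟩ := exists_prime_orderOf_dvd_card' (G := commutator G) q hqG'
  have hQ : Nat.card (zpowers (x : G)) = q := by rw [Nat.card_zpowers, orderOf_coe, hx]
  have := normal_of_le_of_isCyclic (zpowers_le.mpr x.2)
  have hQp : (Nat.card (zpowers (x : G))).Prime := hQ ▸ hq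
  exact not_dvd_card_commutator_of_le_center hG hQp
    (le_center_of_normal_of_card_prime hG hcyc hQp) (hQ ▸ hqG')

theorem squarefree_card_of_forall_ncard_Ioo_eq_two
    (h : ∀ (S : Subgroup G) (p : ℕ), p.Prime → Nat.card S = p * p → (Set.Ioo ⊥ S).ncard = 2) :
    Squarefree (Nat.card G) := by
  rw [Nat.squarefree_iff_prime_squarefree]
  intro p hp hdvd
  have := Fact.mk hp
  obtain ⟨S, hS⟩ := Sylow.exists_subgroup_card_pow_prime p (n := 2) (by rwa [sq])
  rw [sq] at hS
  have := isCyclic_of_ncard_Ioo_eq_two (h S p hp hS)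
  obtain ⟨L₁, L₂, hne, hIoo⟩ := Set.ncard_eq_two.mp (h S p hp hS)
  have hmem₁ : L₁ ∈ Set.Ioo ⊥ S := hIoo ▸ Set.mem_insert _ _
  have hmem₂ : L₂ ∈ Set.Ioo ⊥ S := hIoo ▸ Set.mem_insert_of_mem _ rfl
  have hcard : ∀ L ∈ Set.Ioo ⊥ S, Nat.card L = p := fun L hL =>
    (card_eq_or_card_eq_of_mem_Ioo hp hp hS hL).elim id id
  exact hne (eq_of_le_of_card_eq_of_isCyclic hmem₁.2.le hmem₂.2.le
    (by rw [hcard _ hmem₁, hcard _ hmem₂]))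

end Squarefree

open scoped Classical in
/-- If the subgroup lattice of a finite group `G` is Eulerian (graded with
`μ(a,b) = (-1)^{rank b - rank a}` for `a ≤ b`), then it is Boolean,
equivalently `G` is cyclic of square-free order. -/
theorem stmt9 {G : Type*} [Group G] [Fintype G]
    (μ : Subgroup G → Subgroup G → ℤ)
    (hμ_self : ∀ K : Subgroup G, μ K K = 1)
    (hμ_lt : ∀ K K' : Subgroup G, K < K' →
      μ K K' = -∑ L ∈ Finset.univ.filter (fun L : Subgroup G => K < L ∧ L ≤ K'), μ L K')
    (rk : Subgroup G → ℕ)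
    (hgraded : ∀ a b : Subgroup G, a ⋖ b → rk b = rk a + 1)
    (hEulerian : ∀ a b : Subgroup G, a ≤ b → μ a b = (-1) ^ (rk b - rk a)) :
    IsCyclic G ∧ Squarefree (Nat.card G) := by
  have hIoo : ∀ (S : Subgroup G) (p q : ℕ), p.Prime → q.Prime → Nat.card S = p * q →
      (Set.Ioo ⊥ S).ncard = 2 := fun S p q hp hq hS =>
    ncard_Ioo_eq_two_of_eulerian μ hμ_self hμ_lt rk hgraded hEulerian
      (fun _ => bot_covBy_and_covBy_of_mem_Ioo hp hq hS)
      (nonempty_Ioo_of_card_eq_prime_mul hp hq hS)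
  have hG : Squarefree (Nat.card G) :=
    squarefree_card_of_forall_ncard_Ioo_eq_two fun S p hp => hIoo S p p hp hp
  exact ⟨isCyclic_of_squarefree_of_forall_card_eq_prime_mul hG fun S p q hp hq hS =>
    isCyclic_of_ncard_Ioo_eq_two (hIoo S p q hp hq hS), hG⟩
end

section
/- For any finite group G, the Möbius function of the subgroup lattice satisfies: μ(1,G) is divisible by |G| / |G:G'|_0, where G' is the commutator subgroup and |G:G'|_0 is the square-free part of the index |G:G'|. -/
/-!
Following Kratzer and Thévenaz, one proves by downward induction on `H ≤ G` that `|N_G(H)|`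
divides `|H| · r · μ(H, G)`, where `r` is the square-free part of `|G : G'|`; the theorem is the
case `H = 1`. Summing `∑_{L ≥ H⟨g⟩} μ(L, G) = δ(H⟨g⟩, G)` over `g ∈ N_G(H)` gives
`|H| μ(H, G) = #{g ∈ N_G(H) | H⟨g⟩ = G} - ∑_{L > H} μ(L, G) |N_G(H) ∩ L|`.
The count vanishes unless `H` is normal with `G/H` cyclic of some order `n ∣ |G : G'|`, and then
equals `φ(n) |H|`; as `n ∣ φ(n) · rad(n)`, `r` times it is divisible by `|N_G(H)| = n |H|`.
The sum splits into orbits of `N_G(H)` acting by conjugation, and by the induction hypothesis the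
stabilizer `N_G(H) ∩ N_G(L)` of `L` has order dividing `r μ(L, G) |N_G(H) ∩ L|`, so every orbit sum is
divisible by `|N_G(H)|`.
-/

section

open Finset MulAction
open scoped Classical Pointwise

section PartialOrder

variable {α : Type*} [PartialOrder α] [Fintype α]

theorem sum_filter_le_eq_add_sum_filter_lt {M : Type*} [AddCommMonoid M] (f : α → M) (a : α) :
    ∑ b ∈ univ.filter (a ≤ ·), f b = f a + ∑ b ∈ univ.filter (a < ·), f b := by
  have : univ.filter (a ≤ ·) = insert a (univ.filter (a < ·)) := by
    ext b
    simp [le_iff_eq_or_lt, eq_comm]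
  rw [this, sum_insert (by simp)]

theorem eq_of_forall_sum_filter_le_eq {ν ν' : α → ℤ}
    (h : ∀ a, ∑ b ∈ univ.filter (a ≤ ·), ν b = ∑ b ∈ univ.filter (a ≤ ·), ν' b) : ν = ν' := by
  funext a
  induction a using WellFoundedGT.induction with
  | _ a ih =>
    have := h a
    rw [sum_filter_le_eq_add_sum_filter_lt, sum_filter_le_eq_add_sum_filter_lt,
      sum_congr rfl fun b hb => ih b (mem_filter.1 hb).2] at this
    exact add_right_cancel this

variable [OrderTop α]

theorem sum_filter_le_mobius_top (μ : α → α → ℤ) (hμ_self : ∀ a, μ a a = 1)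
    (hμ_lt : ∀ a b, a < b → μ a b = -∑ c ∈ univ.filter (fun c => a < c ∧ c ≤ b), μ c b)
    (a : α) : ∑ b ∈ univ.filter (a ≤ ·), μ b ⊤ = if a = ⊤ then 1 else 0 := by
  rw [sum_filter_le_eq_add_sum_filter_lt]
  split_ifs with ha
  · subst ha
    simp [hμ_self]
  · simp [hμ_lt a ⊤ (lt_top_iff_ne_top.2 ha)]

theorem apply_orderIso_eq_of_sum_filter_le {ν : α → ℤ}
    (hν : ∀ a, ∑ b ∈ univ.filter (a ≤ ·), ν b = if a = ⊤ then 1 else 0) (e : α ≃o α) (a : α) :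
    ν (e a) = ν a := by
  refine congrFun (eq_of_forall_sum_filter_le_eq (ν := ν ∘ e) fun a => ?_) a
  rw [hν, ← map_eq_top_iff e, ← hν]
  exact sum_equiv e.toEquiv (by simp) (by simp)

end PartialOrder

section Lattice

variable {α : Type*} [Lattice α] [OrderTop α] [Fintype α] {ν : α → ℤ}
  (hν : ∀ a, ∑ b ∈ univ.filter (a ≤ ·), ν b = if a = ⊤ then 1 else 0)
include hν

theorem sum_filter_lt_ite_le (a c : α) :
    ∑ b ∈ univ.filter (a < ·), (if c ≤ b then ν b else 0) =
      (if a ⊔ c = ⊤ then 1 else 0) - if c ≤ a then ν a else 0 := by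
  have h := sum_filter_le_eq_add_sum_filter_lt (fun b => if c ≤ b then ν b else 0) a
  simp only [← sum_filter, filter_filter, ← sup_le_iff, hν] at h
  rw [h, ← sum_filter, filter_filter]
  ring

theorem sum_filter_lt_mul_card_filter_le {β : Type*} (s : Finset β) (j : β → α) (a : α) :
    ∑ b ∈ univ.filter (a < ·), ν b * #(s.filter (j · ≤ b)) =
      #(s.filter (a ⊔ j · = ⊤)) - #(s.filter (j · ≤ a)) * ν a := by
  calc ∑ b ∈ univ.filter (a < ·), ν b * #(s.filter (j · ≤ b))
      = ∑ x ∈ s, ∑ b ∈ univ.filter (a < ·), (if j x ≤ b then ν b else 0) := by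
        rw [sum_comm]
        refine sum_congr rfl fun b _ => ?_
        rw [card_filter, Nat.cast_sum, mul_sum]
        exact sum_congr rfl fun x _ => by split_ifs <;> simp
    _ = ∑ x ∈ s, ((if a ⊔ j x = ⊤ then 1 else 0) - if j x ≤ a then ν a else 0) :=
        sum_congr rfl fun x _ => sum_filter_lt_ite_le hν a (j x)
    _ = _ := by
        rw [sum_sub_distrib, sum_ite, sum_ite]
        simp [mul_comm]

end Lattice

theorem card_dvd_sum_of_card_stabilizer_dvd {K X : Type*} [Group K] [Finite K] [MulAction K X]
    [Fintype X] (f : X → ℤ) (hf : ∀ (k : K) x, f (k • x) = f x)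
    (hdvd : ∀ x, (Nat.card (stabilizer K x) : ℤ) ∣ f x) :
    (Nat.card K : ℤ) ∣ ∑ x, f x := by
  rw [← (selfEquivSigmaOrbits K X).symm.sum_comp, Fintype.sum_sigma]
  refine dvd_sum fun ω _ => ?_
  have horbit : ∀ y : orbit K ω.out, f y = f ω.out := by
    rintro ⟨_, k, rfl⟩
    exact hf k _
  obtain ⟨c, hc⟩ := hdvd ω.out
  calc (Nat.card K : ℤ) ∣ Nat.card K * c := dvd_mul_right _ _
    _ = ∑ y : orbit K ω.out, f y := by
      rw [Fintype.sum_congr _ _ horbit, sum_const, card_univ, ← Nat.card_eq_fintype_card, hc,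
        nsmul_eq_mul, ← mul_assoc, ← Nat.cast_mul, Nat.card_coe_set_eq, ← index_stabilizer,
        Subgroup.index_mul_card]

theorem card_stabilizer_subgroup_eq_card_inf {Γ X : Type*} [Group Γ] [MulAction Γ X]
    (K : Subgroup Γ) (x : X) : Nat.card (stabilizer K x) = Nat.card ↥(K ⊓ stabilizer Γ x) := by
  change Nat.card ((stabilizer Γ x).subgroupOf K) = _
  rw [← Subgroup.inf_subgroupOf_left]
  exact Nat.card_congr (Subgroup.subgroupOfEquivOfLe inf_le_left).toEquiv

theorem Nat.dvd_totient_mul_prod_primeFactors_of_dvd {n m : ℕ} (h : n ∣ m) (hm : m ≠ 0) :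
    n ∣ n.totient * ∏ p ∈ m.primeFactors, p :=
  (Dvd.intro _ (Nat.totient_mul_prod_primeFactors n).symm).trans
    (mul_dvd_mul_left _ (prod_dvd_prod_of_subset _ _ _ (Nat.primeFactors_mono h hm)))

namespace Subgroup

variable {G : Type*} [Group G]

theorem card_inf_mul_relIndex (L M : Subgroup G) :
    Nat.card ↥(L ⊓ M) * L.relIndex M = Nat.card M := by
  simpa [relIndex_bot_left] using relIndex_inf_mul_relIndex ⊥ L M

theorem relIndex_dvd_relIndex_normalizer {L M : Subgroup G} (hM : M ≤ normalizer (L : Set G)) :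
    L.relIndex M ∣ L.relIndex (normalizer (L : Set G)) := by
  rw [← relIndex_subgroupOf hM]
  exact relIndex_dvd_index_of_normal _ _

theorem card_dvd_card_inf_mul_of_le_normalizer {L M : Subgroup G} [Finite L]
    (hM : M ≤ normalizer (L : Set G)) {c : ℤ}
    (hc : (Nat.card (normalizer (L : Set G)) : ℤ) ∣ Nat.card L * c) :
    (Nat.card M : ℤ) ∣ Nat.card ↥(L ⊓ M) * c := by
  rw [← card_inf_mul_relIndex L, inf_of_le_left le_normalizer, Nat.cast_mul] at hc
  rw [← card_inf_mul_relIndex L M, Nat.cast_mul]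
  exact mul_dvd_mul_left _ ((Int.natCast_dvd_natCast.2 (relIndex_dvd_relIndex_normalizer hM)).trans
    ((mul_dvd_mul_iff_left (by exact_mod_cast Nat.card_pos.ne')).1 hc))

theorem card_pointwise_smul {A : Type*} [Group A] [MulDistribMulAction A G] (a : A)
    (K : Subgroup G) : Nat.card ↥(a • K) = Nat.card K :=
  Nat.card_congr (equivSMul a K).toEquiv.symm

theorem sup_zpowers_eq_top_iff (H : Subgroup G) [H.Normal] (g : G) :
    H ⊔ zpowers g = ⊤ ↔ zpowers (g : G ⧸ H) = ⊤ := by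
  have : comap (QuotientGroup.mk' H) (zpowers (g : G ⧸ H)) = H ⊔ zpowers g := by
    rw [← QuotientGroup.mk'_apply, ← MonoidHom.map_zpowers, comap_map_eq, QuotientGroup.ker_mk',
      sup_comm]
  rw [← this, ← comap_top (QuotientGroup.mk' H),
    (comap_injective (QuotientGroup.mk'_surjective H)).eq_iff]

theorem card_filter_zpowers_eq_top {Q : Type*} [Group Q] [Fintype Q] [IsCyclic Q] :
    #(univ.filter fun q : Q => zpowers q = ⊤) = (Fintype.card Q).totient := by
  rw [← IsCyclic.card_orderOf_eq_totient dvd_rfl]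
  congr 1
  ext q
  simp [← card_eq_iff_eq_top, Fintype.card_zpowers, Nat.card_eq_fintype_card]

variable [Fintype G]

theorem card_filter_mem (K : Subgroup G) : #(univ.filter (· ∈ K)) = Nat.card K := by
  rw [← Set.toFinset_ofPred, ← Nat.card_eq_card_toFinset]
  rfl

theorem card_filter_sup_zpowers_eq_top (H : Subgroup G) [H.Normal] :
    #(univ.filter fun g : G => H ⊔ zpowers g = ⊤) =
      #(univ.filter fun q : G ⧸ H => zpowers q = ⊤) * Nat.card H := by
  simp_rw [sup_zpowers_eq_top_iff, ← Set.toFinset_ofPred, ← Nat.card_eq_card_toFinset]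
  rw [mul_comm, ← QuotientGroup.card_preimage_mk]
  rfl

theorem card_normalizer_dvd_mul_card_filter_sup_zpowers_eq_top (H : Subgroup G) :
    Nat.card (normalizer (H : Set G)) ∣ (∏ p ∈ (_root_.commutator G).index.primeFactors, p) *
      #(univ.filter fun g => g ∈ normalizer (H : Set G) ∧ H ⊔ zpowers g = ⊤) := by
  rcases (univ.filter fun g => g ∈ normalizer (H : Set G) ∧ H ⊔ zpowers g = ⊤).eq_empty_or_nonempty
    with h | ⟨g, hg⟩
  · simp [h]
  obtain ⟨hgN, hg⟩ := by simpa only [mem_filter, mem_univ, true_and] using hg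
  have hN : normalizer (H : Set G) = ⊤ :=
    top_le_iff.1 (hg ▸ sup_le le_normalizer (zpowers_le.2 hgN))
  have : H.Normal := normalizer_eq_top_iff.1 hN
  have : IsCyclic (G ⧸ H) :=
    isCyclic_iff_exists_zpowers_eq_top.2 ⟨g, (sup_zpowers_eq_top_iff H g).1 hg⟩
  have hcomm : _root_.commutator G ≤ H := by
    let := IsCyclic.commGroup (α := G ⧸ H)
    simpa using Abelianization.commutator_subset_ker (QuotientGroup.mk' H)
  rw [hN, card_top]
  simp only [mem_top, true_and]
  rw [card_filter_sup_zpowers_eq_top, card_filter_zpowers_eq_top, ← H.index_mul_card,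
    ← Nat.card_eq_fintype_card, ← index, ← mul_assoc]
  refine mul_dvd_mul_right ?_ _
  rw [mul_comm]
  exact Nat.dvd_totient_mul_prod_primeFactors_of_dvd (index_dvd_of_le hcomm) index_ne_zero_of_finite

theorem card_normalizer_dvd_sum_of_conj_invariant (H : Subgroup G) (f : Subgroup G → ℤ)
    (hf : ∀ g ∈ normalizer (H : Set G), ∀ L : Subgroup G, f (ConjAct.toConjAct g • L) = f L)
    (hdvd : ∀ L : Subgroup G,
      (Nat.card ↥(normalizer (H : Set G) ⊓ normalizer (L : Set G)) : ℤ) ∣ f L) :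
    (Nat.card (normalizer (H : Set G)) : ℤ) ∣ ∑ L, f L := by
  let := MulAction.compHom (Subgroup G) (ConjAct.toConjAct : G ≃* ConjAct G).toMonoidHom
  refine card_dvd_sum_of_card_stabilizer_dvd f (fun g L => hf g g.2 L) fun L => ?_
  have hstab : stabilizer G L = normalizer (L : Set G) := by
    ext g
    exact conjAct_pointwise_smul_iff
  rw [card_stabilizer_subgroup_eq_card_inf, hstab]
  exact hdvd L

section MobiusToTop

variable {ν : Subgroup G → ℤ}
  (hν : ∀ L, ∑ M ∈ univ.filter (L ≤ ·), ν M = if L = ⊤ then 1 else 0)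
include hν

theorem apply_smul_eq_of_sum_filter_le {A : Type*} [Group A] [MulDistribMulAction A G] (a : A)
    (L : Subgroup G) : ν (a • L) = ν L :=
  apply_orderIso_eq_of_sum_filter_le hν
    { toEquiv := MulAction.toPerm a, map_rel_iff' := pointwise_smul_le_pointwise_smul_iff } L

theorem card_mul_eq_card_filter_sup_zpowers_sub_sum (H : Subgroup G) :
    Nat.card H * ν H = #(univ.filter fun g => g ∈ normalizer (H : Set G) ∧ H ⊔ zpowers g = ⊤) -
      ∑ L ∈ univ.filter (H < ·), ν L * Nat.card ↥(normalizer (H : Set G) ⊓ L) := by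
  have h := sum_filter_lt_mul_card_filter_le hν (univ.filter (· ∈ normalizer (H : Set G)))
    zpowers H
  simp only [filter_filter, zpowers_le, ← mem_inf, card_filter_mem,
    inf_of_le_right le_normalizer] at h
  rw [h]
  ring

theorem card_normalizer_dvd_card_mul_prod_primeFactors_mul (H : Subgroup G) :
    (Nat.card (normalizer (H : Set G)) : ℤ) ∣
      Nat.card H * ((∏ p ∈ (_root_.commutator G).index.primeFactors, p : ℕ) * ν H) := by
  induction H using WellFoundedGT.induction with
  | _ H ih =>
  generalize hr : ∏ p ∈ (_root_.commutator G).index.primeFactors, p = r at ih ⊢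
  have key : Nat.card H * (r * ν H) =
      r * #(univ.filter fun g => g ∈ normalizer (H : Set G) ∧ H ⊔ zpowers g = ⊤) -
        ∑ L, if H < L then r * ν L * Nat.card ↥(normalizer (H : Set G) ⊓ L) else 0 := by
    rw [← sum_filter, mul_left_comm, card_mul_eq_card_filter_sup_zpowers_sub_sum hν, mul_sub,
      mul_sum]
    simp only [mul_assoc]
  rw [key]
  refine dvd_sub ?_
    (card_normalizer_dvd_sum_of_conj_invariant H _ (fun g hg L => ?_) fun L => ?_)
  · exact_mod_cast hr ▸ card_normalizer_dvd_mul_card_filter_sup_zpowers_eq_top H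
  · have hH : ConjAct.toConjAct g • H = H := conjAct_pointwise_smul_eq_self hg
    have hN : ConjAct.toConjAct g • normalizer (H : Set G) = normalizer (H : Set G) :=
      conjAct_pointwise_smul_eq_self (le_normalizer hg)
    have hlt : H < ConjAct.toConjAct g • L ↔ H < L := by
      conv_lhs => rw [← hH]
      exact (MulAut.conj g).mapSubgroup.lt_iff_lt
    rw [hlt, apply_smul_eq_of_sum_filter_le hν, ← hN, ← smul_inf, card_pointwise_smul, hN]
  · split_ifs with hL
    · have h := card_dvd_card_inf_mul_of_le_normalizer
        (M := normalizer (H : Set G) ⊓ normalizer (L : Set G)) inf_le_right (ih L hL)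
      rwa [inf_left_comm L, inf_of_le_left le_normalizer, mul_comm] at h
    · exact dvd_zero _

end MobiusToTop

end Subgroup

end

open scoped Classical in
/-- Kratzer–Thévenaz: `μ(1,G)` is divisible by `|G| / |G:G'|₀`, where `G'` is
the commutator subgroup and `|G:G'|₀` is the square-free part (radical) of the
index `|G:G'|`. -/
theorem stmt10 {G : Type*} [Group G] [Fintype G]
    (μ : Subgroup G → Subgroup G → ℤ)
    (hμ_self : ∀ K : Subgroup G, μ K K = 1)
    (hμ_lt : ∀ K K' : Subgroup G, K < K' →
      μ K K' = -∑ L ∈ Finset.univ.filter (fun L : Subgroup G => K < L ∧ L ≤ K'), μ L K') :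
    ((Nat.card G / ((commutator G).index.primeFactors.prod id) : ℕ) : ℤ) ∣
      μ ⊥ ⊤ := by
  have h := Subgroup.card_normalizer_dvd_card_mul_prod_primeFactors_mul
    (sum_filter_le_mobius_top μ hμ_self hμ_lt) ⊥
  rw [Subgroup.normalizer_eq_top, Subgroup.card_top, Subgroup.card_bot, Nat.cast_one, one_mul] at h
  have hr : (commutator G).index.primeFactors.prod id ∣ Nat.card G :=
    (Nat.prod_primeFactors_dvd _).trans (Subgroup.index_dvd_card _)
  rw [Int.natCast_div, Int.ediv_dvd_iff_dvd_mul (Int.natCast_dvd_natCast.2 hr)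
    (by exact_mod_cast (Nat.pos_of_dvd_of_pos hr Nat.card_pos).ne')]
  exact h
end

section
/- Let G be a finite group such that the dual Euler totient φ̂(G) := ∑_{H ≤ G} μ(1,H)·|G:H| is nonzero, where μ is the Möbius function of the subgroup lattice. Then G admits a faithful irreducible complex representation. -/
/-!
For a finite-dimensional representation `W` of `G` put `T(W) = ∑_H μ(1,H) · dim W^H`
(`Representation.dualTotient`). Since `dim ℂ[G]^H` is the number of `H`-orbits on `G`, namely
`|G:H|`, the regular representation has `T = φ̂(G)`. The invariant `T` is additive on direct sums,
and it vanishes whenever the kernel `N` of `W` is nontrivial: then `W^H = W^(H ⊔ N)`, and after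
grouping the subgroups `H` according to `H ⊔ N`, Weisner's theorem `∑_{H ⊔ N = M} μ(1,H) = 0`
kills every fibre. By Maschke's theorem every representation is a sum of irreducible ones, so if
none of these is faithful then `T` vanishes identically, and in particular `φ̂(G) = 0`.
-/

open Finset Module CategoryTheory

open scoped Classical

universe u

section Mobius

variable {α : Type*} [Fintype α]

def IsMobiusFunction [PartialOrder α] (μ : α → α → ℤ) : Prop :=
  (∀ a, μ a a = 1) ∧ ∀ a b, a < b → μ a b = -∑ c ∈ univ.filter (fun c => a < c ∧ c ≤ b), μ c b

theorem IsMobiusFunction.eq_mu [PartialOrder α] [LocallyFiniteOrder α] {μ : α → α → ℤ}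
    (hμ : IsMobiusFunction μ) {a b : α} (hab : a ≤ b) : μ a b = IncidenceAlgebra.mu ℤ a b := by
  induction a using WellFoundedGT.induction with
  | _ a ih =>
    obtain rfl | hlt := hab.eq_or_lt
    · simp [hμ.1]
    rw [hμ.2 a b hlt, IncidenceAlgebra.mu_eq_neg_sum_Ioc_of_ne hlt.ne, neg_inj]
    refine sum_congr (by ext; simp) fun c hc => ?_
    exact ih c (mem_Ioc.mp hc).1 (mem_Ioc.mp hc).2

variable [Lattice α] [OrderBot α] {μ : α → α → ℤ}

theorem IsMobiusFunction.sum_Iic_bot (hμ : IsMobiusFunction μ) (b : α) :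
    ∑ a ∈ univ.filter (· ≤ b), μ ⊥ a = if ⊥ = b then 1 else 0 := by
  let := Fintype.toLocallyFiniteOrder (α := α)
  rw [← IncidenceAlgebra.sum_Icc_mu_right]
  exact sum_congr (by ext; simp) fun a _ => hμ.eq_mu bot_le

/-- Weisner's theorem. -/
theorem IsMobiusFunction.sum_bot_filter_sup_eq (hμ : IsMobiusFunction μ) {n : α} (hn : n ≠ ⊥)
    (b : α) : ∑ a ∈ univ.filter (· ⊔ n = b), μ ⊥ a = 0 := by
  induction b using WellFoundedLT.induction with
  | _ b ih =>
    by_cases hnb : n ≤ b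
    swap
    · exact sum_eq_zero fun a ha => absurd ((mem_filter.mp ha).2 ▸ le_sup_right) hnb
    have hb : ⊥ ≠ b := fun h => hn (le_bot_iff.mp (h ▸ hnb))
    have hsum := hμ.sum_Iic_bot b
    have hfilter : univ.filter (· ≤ b) = univ.filter (fun a => a ⊔ n ∈ univ.filter (· ≤ b)) := by
      ext a
      simp [hnb]
    rwa [if_neg hb, hfilter, ← sum_fiberwise_eq_sum_filter, sum_eq_single_of_mem b (by simp)
      fun c hc hcb => ih c ((mem_filter.mp hc).2.lt_of_ne hcb)] at hsum

theorem IsMobiusFunction.sum_bot_mul_eq_zero (hμ : IsMobiusFunction μ) {n : α} (hn : n ≠ ⊥)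
    {f : α → ℤ} (hf : ∀ a, f (a ⊔ n) = f a) : ∑ a, μ ⊥ a * f a = 0 :=
  calc ∑ a, μ ⊥ a * f a = ∑ a, μ ⊥ a * f (a ⊔ n) := by simp only [hf]
    _ = ∑ b, ∑ a ∈ univ.filter (· ⊔ n = b), μ ⊥ a * f (a ⊔ n) := (sum_fiberwise _ _ _).symm
    _ = 0 := sum_eq_zero fun b _ => by
      rw [sum_congr rfl fun a ha => by rw [(mem_filter.mp ha).2], ← sum_mul,
        hμ.sum_bot_filter_sup_eq hn b, zero_mul]

end Mobius

theorem Subrepresentation.isCompl_toSubmodule {k G W : Type*} [Semiring k] [Monoid G]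
    [AddCommMonoid W] [Module k W] {ρ : Representation k G W} {σ τ : Subrepresentation ρ}
    (h : IsCompl σ τ) : IsCompl σ.toSubmodule τ.toSubmodule :=
  ⟨disjoint_iff.mpr (congrArg Subrepresentation.toSubmodule h.inf_eq_bot),
    codisjoint_iff.mpr (congrArg Subrepresentation.toSubmodule h.sup_eq_top)⟩

theorem FDRep.simple_of_isIrreducible {k G V : Type u} [Field k] [IsAlgClosed k] [Group G]
    [Finite G] [NeZero (Nat.card G : k)] [AddCommGroup V] [Module k V] [FiniteDimensional k V]
    (ρ : Representation k G V) [ρ.IsIrreducible] : Simple (FDRep.of ρ) := by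
  rw [FDRep.simple_iff_end_is_rank_one,
    ((FDRep.forget₂HomLinearEquiv _ _).symm ≪≫ₗ Rep.homLinearEquiv _ _).finrank_eq]
  exact Representation.IsIrreducible.finrank_intertwiningMap_self ρ

namespace Representation

section Invariants

variable {k G W : Type*} [CommRing k] [Group G] [AddCommGroup W] [Module k W]
  (ρ : Representation k G W)

theorem invariants_eq_sup_of_isCompl {p q : Submodule k W} (hpq : IsCompl p q)
    (hp : ∀ g, ∀ v ∈ p, ρ g v ∈ p) (hq : ∀ g, ∀ v ∈ q, ρ g v ∈ q) :
    ρ.invariants = p ⊓ ρ.invariants ⊔ q ⊓ ρ.invariants := by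
  refine le_antisymm (fun v hv => ?_) (sup_le inf_le_right inf_le_right)
  obtain ⟨x, hx, y, hy, rfl⟩ :=
    Submodule.mem_sup.mp (hpq.sup_eq_top ▸ Submodule.mem_top (x := v))
  have hfix (g : G) : ρ g x = x ∧ ρ g y = y := by
    have hxy : ρ g x - x = y - ρ g y := by
      have := hv g
      rw [map_add] at this
      linear_combination (norm := abel_nf) this
    have hmem : ρ g x - x ∈ p ⊓ q :=
      ⟨sub_mem (hp g x hx) hx, hxy ▸ sub_mem hy (hq g y hy)⟩
    rw [hpq.inf_eq_bot, Submodule.mem_bot, sub_eq_zero] at hmem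
    exact ⟨hmem, (sub_eq_zero.mp (by rw [← hxy, hmem, sub_self])).symm⟩
  exact Submodule.add_mem_sup ⟨hx, fun g => (hfix g).1⟩ ⟨hy, fun g => (hfix g).2⟩

noncomputable abbrev subgroupInvariants (H : Subgroup G) : Submodule k W :=
  invariants (ρ.comp H.subtype)

theorem mem_subgroupInvariants {H : Subgroup G} {v : W} :
    v ∈ ρ.subgroupInvariants H ↔ ∀ h ∈ H, ρ h v = v :=
  ⟨fun hv h hh => hv ⟨h, hh⟩, fun hv h => hv h h.2⟩

theorem subgroupInvariants_sup_ker (H : Subgroup G) :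
    ρ.subgroupInvariants (H ⊔ ρ.ker) = ρ.subgroupInvariants H := by
  ext v
  simp only [mem_subgroupInvariants]
  refine ⟨fun hv h hh => hv h (Subgroup.mem_sup_left hh), fun hv g hg => ?_⟩
  obtain ⟨h, hh, n, hn, rfl⟩ := Subgroup.mem_sup_of_normal_right.mp hg
  rw [map_mul, Module.End.mul_apply, MonoidHom.mem_ker.mp hn, Module.End.one_apply, hv h hh]

end Invariants

section Finrank

variable {k G W : Type*} [Field k] [Group G] [AddCommGroup W] [Module k W]
  (ρ : Representation k G W)

theorem finrank_subgroupInvariants_toRepresentation (σ : Subrepresentation ρ) (H : Subgroup G) :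
    finrank k (σ.toRepresentation.subgroupInvariants H) =
      finrank k ↥(σ.toSubmodule ⊓ ρ.subgroupInvariants H) := by
  have : σ.toRepresentation.subgroupInvariants H =
      (ρ.subgroupInvariants H).comap σ.toSubmodule.subtype := by
    ext v
    simp only [Submodule.mem_comap, mem_subgroupInvariants]
    exact forall₂_congr fun h _ => Subtype.ext_iff
  rw [this, ← Submodule.map_comap_subtype, Submodule.finrank_map_subtype_eq]

theorem finrank_subgroupInvariants_eq_add [FiniteDimensional k W] {σ τ : Subrepresentation ρ}
    (h : IsCompl σ τ) (H : Subgroup G) :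
    finrank k (ρ.subgroupInvariants H) = finrank k (σ.toRepresentation.subgroupInvariants H) +
      finrank k (τ.toRepresentation.subgroupInvariants H) := by
  have hστ := Subrepresentation.isCompl_toSubmodule h
  rw [finrank_subgroupInvariants_toRepresentation, finrank_subgroupInvariants_toRepresentation,
    ← Submodule.finrank_sup_add_finrank_inf_eq,
    ← invariants_eq_sup_of_isCompl (ρ.comp H.subtype) hστ (fun h => σ.apply_mem_toSubmodule h)
      (fun h => τ.apply_mem_toSubmodule h),
    (hστ.disjoint.mono inf_le_left inf_le_left).eq_bot, finrank_bot, add_zero]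

end Finrank

section Permutation

theorem trace_ofMulAction {k G X : Type*} [CommRing k] [Monoid G] [MulAction G X] [Fintype X]
    (g : G) : LinearMap.trace k _ (ofMulAction k G X g) = Fintype.card (MulAction.fixedBy X g) := by
  rw [LinearMap.trace_eq_matrix_trace k (MonoidAlgebra.basis X k), Matrix.trace,
    Fintype.card_subtype, card_eq_sum_ones, Nat.cast_sum, sum_filter]
  refine sum_congr rfl fun x _ => ?_
  rw [Matrix.diag, LinearMap.toMatrix_apply, MonoidAlgebra.basis_apply, ofMulAction_single,
    ← MonoidAlgebra.basis_apply, Basis.repr_self, Finsupp.single_apply]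
  simp [MulAction.mem_fixedBy]

theorem finrank_invariants_ofMulAction {k G X : Type u} [Field k] [CharZero k] [Group G]
    [Fintype G] [MulAction G X] [Fintype X] :
    finrank k (ofMulAction k G X).invariants = Nat.card (MulAction.orbitRel.Quotient G X) := by
  have : Invertible (Nat.card G : k) := invertibleOfNonzero (NeZero.ne _)
  have hchar (g : G) : (FDRep.of (ofMulAction k G X)).character g =
      Fintype.card (MulAction.fixedBy X g) := trace_ofMulAction g
  have h : (Nat.card G : k)⁻¹ * ∑ g : G, (FDRep.of (ofMulAction k G X)).character g =
      finrank k (ofMulAction k G X).invariants :=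
    FDRep.average_char_eq_finrank_invariants _
  rw [Fintype.sum_congr _ _ hchar, ← Nat.cast_sum,
    MulAction.sum_card_fixedBy_eq_card_orbits_mul_card_group, Nat.cast_mul,
    Fintype.card_eq_nat_card, Fintype.card_eq_nat_card, mul_comm,
    mul_inv_cancel_right₀ (NeZero.ne _)] at h
  exact_mod_cast h.symm

theorem finrank_subgroupInvariants_leftRegular {k G : Type u} [Field k] [CharZero k] [Group G]
    [Fintype G] (H : Subgroup G) :
    finrank k ((leftRegular k G).subgroupInvariants H) = H.index := by
  rw [Subgroup.index_eq_card,
    ← Nat.card_congr (QuotientGroup.quotientRightRelEquivQuotientLeftRel H)]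
  exact finrank_invariants_ofMulAction (G := H)

end Permutation

section DualTotient

variable {k G W : Type*} [Field k] [Group G] [Fintype G] [AddCommGroup W] [Module k W]
  (ρ : Representation k G W) (μ : Subgroup G → Subgroup G → ℤ)

noncomputable def dualTotient : ℤ :=
  ∑ H : Subgroup G, μ ⊥ H * finrank k (ρ.subgroupInvariants H)

variable {μ}

theorem dualTotient_eq_zero_of_ker_ne_bot (hμ : IsMobiusFunction μ) (hker : ρ.ker ≠ ⊥) :
    ρ.dualTotient μ = 0 :=
  hμ.sum_bot_mul_eq_zero hker fun H => by rw [subgroupInvariants_sup_ker]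

theorem dualTotient_eq_add [FiniteDimensional k W] {σ τ : Subrepresentation ρ}
    (h : IsCompl σ τ) :
    ρ.dualTotient μ = σ.toRepresentation.dualTotient μ + τ.toRepresentation.dualTotient μ := by
  simp only [dualTotient, ← sum_add_distrib, ← mul_add, finrank_subgroupInvariants_eq_add ρ h,
    Nat.cast_add]

end DualTotient

theorem dualTotient_leftRegular {k G : Type u} [Field k] [CharZero k] [Group G] [Fintype G]
    (μ : Subgroup G → Subgroup G → ℤ) :
    (leftRegular k G).dualTotient μ = ∑ H : Subgroup G, μ ⊥ H * H.index := by
  simp only [dualTotient, finrank_subgroupInvariants_leftRegular]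

theorem dualTotient_eq_zero_of_not_exists_faithful_simple {k G W : Type u} [Field k]
    [IsAlgClosed k] [Group G] [Fintype G] [NeZero (Nat.card G : k)] [AddCommGroup W]
    [Module k W] [FiniteDimensional k W] {μ : Subgroup G → Subgroup G → ℤ}
    (hμ : IsMobiusFunction μ) (hG : ¬ ∃ V : FDRep k G, Simple V ∧ Function.Injective V.ρ)
    (ρ : Representation k G W) : ρ.dualTotient μ = 0 := by
  induction hn : finrank k W using Nat.strong_induction_on generalizing W with
  | _ n ih =>
    by_cases hker : ρ.ker = ⊥
    swap
    · exact dualTotient_eq_zero_of_ker_ne_bot ρ hμ hker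
    by_cases hsplit : ∃ σ : Subrepresentation ρ, σ ≠ ⊥ ∧ σ ≠ ⊤
    · obtain ⟨σ, hσ_bot, hσ_top⟩ := hsplit
      obtain ⟨τ, hστ⟩ := exists_isCompl σ
      have hτ_top : τ ≠ ⊤ := fun h => hσ_bot (eq_bot_of_isCompl_top (h ▸ hστ))
      have hlt {ν : Subrepresentation ρ} (h : ν ≠ ⊤) : finrank k ν.toSubmodule < n :=
        hn ▸ Submodule.finrank_lt fun h' => h (Subrepresentation.toSubmodule_injective h')
      rw [dualTotient_eq_add ρ hστ, ih _ (hlt hσ_top) σ.toRepresentation rfl,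
        ih _ (hlt hτ_top) τ.toRepresentation rfl, add_zero]
    push Not at hsplit
    rcases subsingleton_or_nontrivial W with hW | hW
    · simp [dualTotient, finrank_zero_of_subsingleton]
    have : ρ.IsIrreducible :=
      { exists_pair_ne := ⟨⊥, ⊤, fun h => bot_ne_top (congrArg Subrepresentation.toSubmodule h)⟩
        eq_bot_or_eq_top := fun σ => or_iff_not_imp_left.mpr (hsplit σ) }
    exact (hG ⟨_, FDRep.simple_of_isIrreducible ρ, (MonoidHom.ker_eq_bot_iff ρ).mp hker⟩).elim

end Representation

open scoped Classical in
/-- If the dual Euler totient `φ̂(G) = ∑_{H ≤ G} μ(1,H)·|G:H|` of a finite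
group `G` is nonzero, then `G` admits a faithful irreducible complex
representation. -/
theorem stmt14 {G : Type} [Group G] [Fintype G]
    (μ : Subgroup G → Subgroup G → ℤ)
    (hμ_self : ∀ K : Subgroup G, μ K K = 1)
    (hμ_lt : ∀ K K' : Subgroup G, K < K' →
      μ K K' = -∑ L ∈ Finset.univ.filter (fun L : Subgroup G => K < L ∧ L ≤ K'), μ L K')
    (hne : (∑ H : Subgroup G, μ ⊥ H * (H.index : ℤ)) ≠ 0) :
    ∃ V : FDRep ℂ G, CategoryTheory.Simple V ∧ Function.Injective V.ρ := by
  by_contra hG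
  rw [← Representation.dualTotient_leftRegular (k := ℂ)] at hne
  exact hne (Representation.dualTotient_eq_zero_of_not_exists_faithful_simple
    ⟨hμ_self, hμ_lt⟩ hG _)
end

section
/- Let G be a finite group and H ≤ G. Define ψ(H) := ∑_{K ∈ [H,G]} μ(K,G)·|K| where μ is the Möbius function of the interval [H,G]. If t is the meet of all coatoms of [H,G] (the intersection of all maximal subgroups of G containing H), then ∑_{K ∈ [H,G]} μ(K,G)·|K:H| = |t:H| · ∑_{K ∈ [t,G]} μ(K,G)·|K:t|. -/
/-!
This is P. Hall's vanishing theorem for the Möbius function, in the lattice of subgroups above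
`H`. Write `c(K)` for the meet of the coatoms above `K`. If `c(K) ≰ K`, then every `L ≥ K`
with `c(K) ≰ L` has `μ(L, G) = 0` by downward induction, so the defining relation
`∑_{L ≥ K} μ(L, G) = 0` reduces to `μ(K, G) + ∑_{L ≥ c(K)} μ(L, G) = 0`, whose second term
vanishes as well. Since `c` is monotone, every `K ≥ H` with `μ(K, G) ≠ 0` contains
`t = c(H)`, and `|K : H| = |t : H| · |K : t|`.
-/

open Finset
open scoped Classical

theorem sum_filter_le_eq_zero_of_eq_neg_sum_filter_lt {α : Type*} [PartialOrder α] [OrderTop α]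
    [Fintype α] {f : α → ℤ} (hf : ∀ a, a < ⊤ → f a = -∑ b ∈ univ.filter (a < ·), f b)
    {a : α} (ha : a ≠ ⊤) :
    ∑ b ∈ univ.filter (a ≤ ·), f b = 0 := by
  have hsplit : univ.filter (a ≤ ·) = insert a (univ.filter (a < ·)) := by
    ext b
    simp [le_iff_eq_or_lt, eq_comm]
  rw [hsplit, sum_insert (by simp), hf a (lt_top_iff_ne_top.mpr ha), neg_add_cancel]

section CoatomInf

variable {α : Type*} [CompleteLattice α]

def coatomInf (a : α) : α := sInf {m | a ≤ m ∧ IsCoatom m}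

theorem le_coatomInf (a : α) : a ≤ coatomInf a := le_sInf fun _ hm => hm.1

theorem coatomInf_mono : Monotone (coatomInf : α → α) :=
  fun _ _ hab => sInf_le_sInf fun _ hm => ⟨hab.trans hm.1, hm.2⟩

@[simp]
theorem coatomInf_top : coatomInf (⊤ : α) = ⊤ :=
  sInf_eq_top.mpr fun _ hm => top_le_iff.mp hm.1

theorem coatomInf_ne_top [IsCoatomic α] {a : α} (ha : a ≠ ⊤) : coatomInf a ≠ ⊤ := by
  obtain ⟨m, hm, ham⟩ := (eq_top_or_exists_le_coatom a).resolve_left ha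
  exact ne_top_of_le_ne_top hm.1 (sInf_le ⟨ham, hm⟩)

variable [Fintype α] {f : α → ℤ}

theorem eq_zero_of_not_coatomInf_le (hf : ∀ a : α, a ≠ ⊤ → ∑ b ∈ univ.filter (a ≤ ·), f b = 0)
    (a : α) (ha : ¬coatomInf a ≤ a) : f a = 0 := by
  induction a using WellFoundedGT.induction with
  | _ a ih =>
  set c := coatomInf a
  have ha_top : a ≠ ⊤ := by rintro rfl; simp at ha
  have hac : a ≤ c := le_coatomInf a
  have hfar : ∑ b ∈ univ.filter (a ≤ ·) with ¬c ≤ b, f b = f a := by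
    refine sum_eq_single_of_mem a (by simpa using ha) fun b hb hba => ih b ?_ ?_
    · simp only [mem_filter, mem_univ, true_and] at hb
      exact lt_of_le_of_ne hb.1 (Ne.symm hba)
    · simp only [mem_filter, mem_univ, true_and] at hb
      exact fun h => hb.2 ((coatomInf_mono hb.1).trans h)
  have hnear : ∑ b ∈ univ.filter (a ≤ ·) with c ≤ b, f b = 0 := by
    rw [filter_filter]
    convert hf c (coatomInf_ne_top ha_top) using 3 with b
    exact and_iff_right_of_imp hac.trans
  calc f a = ∑ b ∈ univ.filter (a ≤ ·) with c ≤ b, f b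
        + ∑ b ∈ univ.filter (a ≤ ·) with ¬c ≤ b, f b := by rw [hnear, hfar, zero_add]
    _ = 0 := by rw [sum_filter_add_sum_filter_not, hf a ha_top]

theorem sum_filter_le_mul_eq_sum_filter_coatomInf_le
    (hf : ∀ a : α, a ≠ ⊤ → ∑ b ∈ univ.filter (a ≤ ·), f b = 0) (a : α) (g : α → ℤ) :
    ∑ b ∈ univ.filter (a ≤ ·), f b * g b = ∑ b ∈ univ.filter (coatomInf a ≤ ·), f b * g b := by
  refine (sum_subset (fun b hb => ?_) fun b hb hcb => ?_).symm
  · simp only [mem_filter, mem_univ, true_and] at hb ⊢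
    exact (le_coatomInf a).trans hb
  · simp only [mem_filter, mem_univ, true_and] at hb hcb
    rw [eq_zero_of_not_coatomInf_le hf b fun h => hcb ((coatomInf_mono hb).trans h), zero_mul]

end CoatomInf

open scoped Classical in
theorem stmt16_general {G : Type*} [Group G] [Fintype G] (H : Subgroup G)
    (μ : Subgroup G → Subgroup G → ℤ)
    (hμ_lt : ∀ K K' : Subgroup G, K < K' →
      μ K K' = -∑ L ∈ Finset.univ.filter (fun L : Subgroup G => K < L ∧ L ≤ K'), μ L K') :
    (∑ K ∈ Finset.univ.filter (fun K : Subgroup G => H ≤ K),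
        μ K ⊤ * (H.relIndex K : ℤ)) =
      (H.relIndex (sInf {M : Subgroup G | H ≤ M ∧ IsCoatom M}) : ℤ) *
        ∑ K ∈ Finset.univ.filter
            (fun K : Subgroup G => sInf {M : Subgroup G | H ≤ M ∧ IsCoatom M} ≤ K),
          μ K ⊤ * ((sInf {M : Subgroup G | H ≤ M ∧ IsCoatom M}).relIndex K : ℤ) := by
  have hμ : ∀ K : Subgroup G, K ≠ ⊤ → ∑ L ∈ univ.filter (K ≤ ·), μ L ⊤ = 0 :=
    fun K => sum_filter_le_eq_zero_of_eq_neg_sum_filter_lt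
      fun K hK => by simpa only [le_top, and_true] using hμ_lt K ⊤ hK
  change _ = (H.relIndex (coatomInf H) : ℤ) *
    ∑ K ∈ univ.filter (coatomInf H ≤ ·), μ K ⊤ * ((coatomInf H).relIndex K : ℤ)
  rw [sum_filter_le_mul_eq_sum_filter_coatomInf_le hμ, mul_sum]
  refine sum_congr rfl fun K hK => ?_
  rw [← Subgroup.relIndex_mul_relIndex H (coatomInf H) K (le_coatomInf H) (by simpa using hK)]
  push_cast
  ring

open scoped Classical in
/-- For finite groups `H ≤ G`, if `t` is the intersection of all maximal
subgroups of `G` containing `H` (the meet of the coatoms of `[H,G]`), then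
`∑_{K ∈ [H,G]} μ(K,G)·|K:H| = |t:H| · ∑_{K ∈ [t,G]} μ(K,G)·|K:t|`. -/
theorem stmt16 {G : Type*} [Group G] [Fintype G] (H : Subgroup G)
    (μ : Subgroup G → Subgroup G → ℤ)
    (hμ_self : ∀ K : Subgroup G, μ K K = 1)
    (hμ_lt : ∀ K K' : Subgroup G, K < K' →
      μ K K' = -∑ L ∈ Finset.univ.filter (fun L : Subgroup G => K < L ∧ L ≤ K'), μ L K') :
    (∑ K ∈ Finset.univ.filter (fun K : Subgroup G => H ≤ K),
        μ K ⊤ * (H.relIndex K : ℤ)) =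
      (H.relIndex (sInf {M : Subgroup G | H ≤ M ∧ IsCoatom M}) : ℤ) *
        ∑ K ∈ Finset.univ.filter
            (fun K : Subgroup G => sInf {M : Subgroup G | H ≤ M ∧ IsCoatom M} ≤ K),
          μ K ⊤ * ((sInf {M : Subgroup G | H ≤ M ∧ IsCoatom M}).relIndex K : ℤ) :=
  stmt16_general H μ hμ_lt
end

section
/- In a finite lattice L, if b is an element not lying above the meet t of all coatoms of L (i.e., ¬(t ≤ b)), then μ(b, ⊤) = 0. -/
open scoped Classical in
/-- In a finite lattice, if `b` does not lie above the meet `t` of all the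
coatoms, then `μ(b, ⊤) = 0`. -/
theorem stmt17 {L : Type*} [Lattice L] [BoundedOrder L] [Fintype L]
    (μ : L → L → ℤ)
    (hμ_self : ∀ x : L, μ x x = 1)
    (hμ_lt : ∀ x y : L, x < y →
      μ x y = -∑ c ∈ Finset.univ.filter (fun c : L => x < c ∧ c ≤ y), μ c y)
    (b : L)
    (hb : ¬ (Finset.univ.filter (fun c : L => IsCoatom c)).inf id ≤ b) :
    μ b ⊤ = 0 := by
  set t := (Finset.univ.filter (fun c : L => IsCoatom c)).inf id with ht
  -- key fact: for a < ⊤, the sum of μ c ⊤ over all c ≥ a is 0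
  have key : ∀ a : L, a < ⊤ →
      ∑ c ∈ Finset.univ.filter (fun c : L => a ≤ c), μ c ⊤ = 0 := by
    intro a ha
    have hset : Finset.univ.filter (fun c : L => a ≤ c)
        = insert a (Finset.univ.filter (fun c : L => a < c ∧ c ≤ ⊤)) := by
      ext c
      simp only [Finset.mem_filter, Finset.mem_univ, true_and, Finset.mem_insert]
      constructor
      · intro h
        rcases eq_or_lt_of_le h with h' | h'
        · exact Or.inl h'.symm
        · exact Or.inr ⟨h', le_top⟩
      · rintro (rfl | ⟨h', -⟩)
        · exact le_refl _
        · exact h'.le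
    have hnot : a ∉ Finset.univ.filter (fun c : L => a < c ∧ c ≤ ⊤) := by
      simp
    rw [hset, Finset.sum_insert hnot, hμ_lt a ⊤ ha]
    ring
  -- main claim by downward induction
  have main : ∀ b : L, ¬ t ≤ b → μ b ⊤ = 0 := by
    intro b
    induction b using WellFoundedGT.induction with
    | ind b IH =>
    intro hb
    have hbt : b ≠ ⊤ := by rintro rfl; exact hb le_top
    obtain ⟨m, hm, hbm⟩ := (eq_top_or_exists_le_coatom b).resolve_left hbt
    have htm : t ≤ m := Finset.inf_le (by simp [hm])
    have hat : b ⊔ t < ⊤ := lt_of_le_of_lt (sup_le hbm htm) (lt_top_iff_ne_top.mpr hm.1)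
    rw [hμ_lt b ⊤ (lt_top_iff_ne_top.mpr hbt)]
    have hsplit := Finset.sum_filter_add_sum_filter_not
      (Finset.univ.filter (fun c : L => b < c ∧ c ≤ ⊤)) (fun c : L => t ≤ c) (fun c => μ c ⊤)
    rw [Finset.filter_filter, Finset.filter_filter] at hsplit
    have h2 : ∑ c ∈ Finset.univ.filter (fun c : L => (b < c ∧ c ≤ ⊤) ∧ ¬ t ≤ c), μ c ⊤ = 0 := by
      apply Finset.sum_eq_zero
      intro c hc
      simp only [Finset.mem_filter, Finset.mem_univ, true_and] at hc
      exact IH c hc.1.1 hc.2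
    have h1 : Finset.univ.filter (fun c : L => (b < c ∧ c ≤ ⊤) ∧ t ≤ c)
        = Finset.univ.filter (fun c : L => b ⊔ t ≤ c) := by
      ext c
      simp only [Finset.mem_filter, Finset.mem_univ, true_and]
      constructor
      · rintro ⟨⟨hbc, -⟩, htc⟩
        exact sup_le hbc.le htc
      · intro h
        have hbc : b ≤ c := le_sup_left.trans h
        have htc : t ≤ c := le_sup_right.trans h
        refine ⟨⟨lt_of_le_of_ne hbc ?_, le_top⟩, htc⟩
        rintro rfl
        exact hb htc
    rw [← hsplit, h2, h1, key (b ⊔ t) hat]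
    ring
  exact main b hb
end

section
/- The minimal number of irreducible components of a faithful complex representation of a finite group G is at most the minimal length ℓ of a chain of subgroups {e} = H_0 < H_1 < ... < H_ℓ = G such that the dual Euler totient φ̂(H_i, H_{i+1}) := ∑_{K ∈ [H_i, H_{i+1}]} μ(H_i, K)·|H_{i+1}:K| is nonzero for each i. -/
/-!
For a subgroup chain `Hᵢ ≤ Hᵢ₊₁` put `F_U(i) = ∑_{L ∈ [Hᵢ, Hᵢ₊₁]} μ(Hᵢ, L) · dim U^L`. For the regular
representation `dim ℂ[G]^L = |G : L|`, so `F_{ℂ[G]}(i) = |G : Hᵢ₊₁| · φ̂(Hᵢ, Hᵢ₊₁) ≠ 0`; since `F_U(i)`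
is a linear function of the character of `U`, some irreducible constituent `Uᵢ` has `F_{Uᵢ}(i) ≠ 0`.
The sum `U₁ ⊕ ⋯ ⊕ U_ℓ` is faithful: if its kernel `N` were nontrivial, pick `i` with
`N ∩ Hᵢ = 1 ≠ N ∩ Hᵢ₊₁ =: M`. Then `M ≤ ker Uᵢ`, so `dim Uᵢ^L = dim Uᵢ^(L ⊔ M)`, and Weisner's
theorem (`M ⊄ Hᵢ`) makes `F_{Uᵢ}(i)` vanish.
-/

open Finset Module CategoryTheory Representation IncidenceAlgebra

section Moebius

variable {𝕜 α : Type*} [Ring 𝕜] [DecidableEq α]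

theorem IncidenceAlgebra.eq_mu_of_eq_neg_sum_Ioc [PartialOrder α] [LocallyFiniteOrder α]
    [WellFoundedGT α] {μ : α → α → 𝕜} (h_self : ∀ a, μ a a = 1)
    (h_lt : ∀ a b, a < b → μ a b = -∑ x ∈ Ioc a b, μ x b) {a b : α} (hab : a ≤ b) :
    μ a b = mu 𝕜 a b := by
  induction a using WellFoundedGT.induction with
  | _ a ih =>
    obtain rfl | hlt := hab.eq_or_lt
    · rw [h_self, mu_self]
    · rw [h_lt a b hlt, mu_eq_neg_sum_Ioc_of_ne hlt.ne]
      congr 1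
      refine sum_congr rfl fun x hx => ?_
      rw [mem_Ioc] at hx
      exact ih x hx.1 hx.2

variable [Lattice α] [LocallyFiniteOrder α]

/-- Weisner's theorem. -/
theorem IncidenceAlgebra.sum_mu_filter_sup_eq_zero {a b m : α} (hm : ¬ m ≤ a) :
    ∑ x ∈ Icc a b with x ⊔ m = b, mu 𝕜 a x = 0 := by
  classical
  calc ∑ x ∈ Icc a b with x ⊔ m = b, mu 𝕜 a x
      = ∑ x ∈ Icc a b, mu 𝕜 a x * ∑ y ∈ Icc (x ⊔ m) b, mu 𝕜 y b := by
        rw [sum_filter]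
        refine sum_congr rfl fun x _ => ?_
        rw [sum_Icc_mu_left]
        split_ifs <;> simp
    _ = ∑ y ∈ Icc a b with m ≤ y, (∑ x ∈ Icc a y, mu 𝕜 a x) * mu 𝕜 y b := by
        simp_rw [mul_sum, sum_mul]
        refine sum_comm' fun x y => ?_
        simp only [mem_Icc, mem_filter, sup_le_iff]
        constructor
        · rintro ⟨⟨hax, -⟩, ⟨hxy, hmy⟩, hyb⟩
          exact ⟨⟨hax, hxy⟩, ⟨hax.trans hxy, hyb⟩, hmy⟩
        · rintro ⟨⟨hax, hxy⟩, ⟨-, hyb⟩, hmy⟩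
          exact ⟨⟨hax, hxy.trans hyb⟩, ⟨hxy, hmy⟩, hyb⟩
    _ = 0 := by
        refine sum_eq_zero fun y hy => ?_
        rw [sum_Icc_mu_right, if_neg, zero_mul]
        rintro rfl
        exact hm (mem_filter.1 hy).2

theorem IncidenceAlgebra.sum_mu_mul_eq_zero_of_apply_sup_eq {a b m : α} (hma : ¬ m ≤ a)
    (hmb : m ≤ b) {f : α → 𝕜} (hf : ∀ x, f (x ⊔ m) = f x) :
    ∑ x ∈ Icc a b, mu 𝕜 a x * f x = 0 := by
  classical
  have hmaps : ∀ x ∈ Icc a b, x ⊔ m ∈ Icc a b := fun x hx => by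
    rw [mem_Icc] at hx ⊢
    exact ⟨le_sup_of_le_left hx.1, sup_le hx.2 hmb⟩
  rw [← sum_fiberwise_of_maps_to hmaps]
  refine sum_eq_zero fun y hy => ?_
  have hfibre : {x ∈ Icc a b | x ⊔ m = y} = {x ∈ Icc a y | x ⊔ m = y} := by
    ext x
    simp only [mem_filter, mem_Icc]
    constructor
    · rintro ⟨⟨hax, -⟩, rfl⟩
      exact ⟨⟨hax, le_sup_left⟩, rfl⟩
    · rintro ⟨⟨hax, hxy⟩, rfl⟩
      exact ⟨⟨hax, hxy.trans (mem_Icc.1 hy).2⟩, rfl⟩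
  calc ∑ x ∈ Icc a b with x ⊔ m = y, mu 𝕜 a x * f x
      = ∑ x ∈ Icc a y with x ⊔ m = y, mu 𝕜 a x * f y := by
        rw [hfibre]
        refine sum_congr rfl fun x hx => ?_
        rw [← (mem_filter.1 hx).2, hf]
    _ = 0 := by rw [← sum_mul, sum_mu_filter_sup_eq_zero hma, zero_mul]

end Moebius

theorem Fin.exists_castSucc_and_not_succ {n : ℕ} {P : Fin (n + 1) → Prop} (h0 : P 0)
    (hlast : ¬ P (Fin.last n)) : ∃ i : Fin n, P i.castSucc ∧ ¬ P i.succ := by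
  by_contra! h
  exact hlast (Fin.induction h0 h (Fin.last n))

theorem LinearMap.trace_eq_trace_restrict_add_trace_restrict {K M : Type*} [Field K]
    [AddCommGroup M] [Module K M] [FiniteDimensional K M] {p q : Submodule K M} (h : IsCompl p q)
    {f : M →ₗ[K] M} (hp : Set.MapsTo f p p) (hq : Set.MapsTo f q q) :
    trace K M f = trace K p (f.restrict hp) + trace K q (f.restrict hq) := by
  have hint : DirectSum.IsInternal ![p, q] :=
    (DirectSum.isInternal_submodule_iff_isCompl _ (i := 0) (j := 1) (by decide)
      (by ext i; fin_cases i <;> simp)).2 h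
  rw [trace_eq_sum_trace_restrict hint (f := f) (fun i => by fin_cases i; exacts [hp, hq]),
    Fin.sum_univ_two]
  rfl

theorem Subrepresentation.isCompl_toSubmodule_s18 {k G V : Type*} [Field k] [Monoid G]
    [AddCommGroup V] [Module k V] {ρ : Representation k G V} {p q : Subrepresentation ρ}
    (h : IsCompl p q) : IsCompl p.toSubmodule q.toSubmodule :=
  ⟨disjoint_iff.2 (congrArg toSubmodule h.inf_eq_bot),
    codisjoint_iff.2 (congrArg toSubmodule h.sup_eq_top)⟩

theorem Representation.invariants_comp_sup_subtype {k G V : Type*} [CommRing k] [Group G]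
    [AddCommGroup V] [Module k V] (ρ : Representation k G V) (L : Subgroup G)
    {M : Subgroup G} (hM : M ≤ ρ.ker) :
    invariants (ρ.comp (L ⊔ M).subtype) = invariants (ρ.comp L.subtype) := by
  ext v
  simp only [mem_invariants, MonoidHom.coe_comp, Subgroup.coe_subtype, Function.comp_apply,
    Subtype.forall]
  refine ⟨fun h l hl => h l (Subgroup.mem_sup_left hl), fun h g hg => ?_⟩
  rw [Subgroup.sup_eq_closure] at hg
  induction hg using Subgroup.closure_induction with
  | mem g hg =>
    exact hg.elim (h g) fun hgM => by rw [MonoidHom.mem_ker.1 (hM hgM), Module.End.one_apply]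
  | one => simp
  | mul x y _ _ hx hy => rw [map_mul, Module.End.mul_apply, hy, hx]
  | inv x _ hx =>
    rw [← hx, ← Module.End.mul_apply, ← map_mul, inv_mul_cancel, map_one, Module.End.one_apply,
      hx]

noncomputable def Subgroup.average {k G : Type*} [Field k] [Group G] (L : Subgroup G)
    [Fintype L] : (G → k) →ₗ[k] k :=
  (Nat.card L : k)⁻¹ • ∑ l : L, LinearMap.proj (l : G)

theorem Subgroup.average_apply {k G : Type*} [Field k] [Group G] (L : Subgroup G) [Fintype L]
    (f : G → k) : L.average f = (Nat.card L : k)⁻¹ * ∑ l : L, f l := by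
  simp [average]

namespace FDRep

theorem character_eq_add_of_isCompl {k G : Type*} [Field k] [Monoid G] (V : FDRep k G)
    {p q : Subrepresentation V.ρ} (h : IsCompl p q) :
    V.character = (of p.toRepresentation).character + (of q.toRepresentation).character := by
  funext g
  exact LinearMap.trace_eq_trace_restrict_add_trace_restrict
    (Subrepresentation.isCompl_toSubmodule_s18 h) (p.apply_mem_toSubmodule g)
    (q.apply_mem_toSubmodule g)

theorem character_eq_zero_of_subsingleton {k G : Type*} [Field k] [Monoid G] (V : FDRep k G)
    [Subsingleton V] : V.character = 0 := by
  funext g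
  simp [character, Subsingleton.elim (V.ρ g) 0]

theorem average_character {k G : Type*} [Field k] [CharZero k] [Group G] (V : FDRep k G)
    (L : Subgroup G) [Fintype L] :
    L.average V.character = finrank k (invariants (V.ρ.comp L.subtype)) := by
  have : Invertible (Nat.card L : k) := invertibleOfNonzero (Nat.cast_ne_zero.2 Nat.card_pos.ne')
  rw [L.average_apply]
  exact average_char_eq_finrank_invariants (of (V.ρ.comp L.subtype))

open TannakaDuality.FiniteGroup in
theorem character_rightFDRep {k G : Type} [Field k] [Group G] [Fintype G] [DecidableEq G]
    (g : G) :
    (rightFDRep : FDRep k G).character g = if g = 1 then (Fintype.card G : k) else 0 := by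
  change LinearMap.trace k (G → k) (rightRegular g) = _
  simp [LinearMap.trace_eq_matrix_trace k (Pi.basisFun k G), Matrix.trace, Pi.single_apply]

open TannakaDuality.FiniteGroup in
theorem finrank_invariants_rightFDRep {k G : Type} [Field k] [CharZero k] [Group G] [Fintype G]
    [DecidableEq G] (L : Subgroup G) [Fintype L] :
    finrank k (invariants ((rightFDRep : FDRep k G).ρ.comp L.subtype)) = L.index := by
  apply Nat.cast_injective (R := k)
  rw [← average_character, L.average_apply]
  simp only [character_rightFDRep, OneMemClass.coe_eq_one, sum_ite_eq', mem_univ, if_true,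
    ← Nat.card_eq_fintype_card, ← L.card_mul_index, Nat.cast_mul]
  field_simp

variable {G : Type} [Group G] [Finite G]

theorem simple_of_isIrreducible_s18 (V : FDRep ℂ G) [IsIrreducible V.ρ] : Simple V := by
  rw [simple_iff_end_is_rank_one, ← (forget₂HomLinearEquiv V V).finrank_eq,
    (Rep.homLinearEquiv _ _).finrank_eq]
  change finrank ℂ (IntertwiningMap V.ρ V.ρ) = 1
  exact IsIrreducible.finrank_intertwiningMap_self _

theorem exists_simple_apply_character_ne_zero (Λ : (G → ℂ) →+ ℂ) (V : FDRep ℂ G)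
    (hV : Λ V.character ≠ 0) : ∃ W : FDRep ℂ G, Simple W ∧ Λ W.character ≠ 0 := by
  induction hn : finrank ℂ V using Nat.strong_induction_on generalizing V with
  | _ n ih =>
  by_cases hsplit : ∃ p : Subrepresentation V.ρ, p ≠ ⊥ ∧ p ≠ ⊤
  · obtain ⟨p, hp_bot, hp_top⟩ := hsplit
    obtain ⟨q, hpq⟩ := exists_isCompl p
    have hlt : ∀ r : Subrepresentation V.ρ, r ≠ ⊤ → finrank ℂ (of r.toRepresentation) < n :=
      fun r hr => hn ▸ Submodule.finrank_lt fun h => hr (Subrepresentation.toSubmodule_injective h)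
    rw [character_eq_add_of_isCompl V hpq, map_add] at hV
    by_cases hΛp : Λ (of p.toRepresentation).character = 0
    · rw [hΛp, zero_add] at hV
      exact ih _ (hlt q fun hq => hp_bot (eq_bot_of_isCompl_top (hq ▸ hpq))) _ hV rfl
    · exact ih _ (hlt p hp_top) _ hΛp rfl
  · have hnontriv : (⊥ : Subrepresentation V.ρ) ≠ ⊤ := by
      intro h
      have : Subsingleton V := (Submodule.subsingleton_iff ℂ).1
        (subsingleton_iff_bot_eq_top.1 (congrArg Subrepresentation.toSubmodule h))
      exact hV (by rw [character_eq_zero_of_subsingleton, map_zero])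
    push Not at hsplit
    have : IsIrreducible V.ρ :=
      { exists_pair_ne := ⟨⊥, ⊤, hnontriv⟩
        eq_bot_or_eq_top := fun p => or_iff_not_imp_left.2 (hsplit p) }
    exact ⟨V, simple_of_isIrreducible_s18 V, hV⟩

end FDRep

section SubgroupInterval

variable {G : Type} [Group G] [DecidableEq (Subgroup G)] [LocallyFiniteOrder (Subgroup G)]

open TannakaDuality.FiniteGroup in
theorem FDRep.exists_simple_sum_mu_mul_finrank_invariants_ne_zero [Fintype G] {a b : Subgroup G}
    (hφ : ∑ L ∈ Icc a b, mu ℤ a L * (L.relIndex b : ℤ) ≠ 0) :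
    ∃ U : FDRep ℂ G, Simple U ∧
      ∑ L ∈ Icc a b, mu ℤ a L * (finrank ℂ (invariants (U.ρ.comp L.subtype)) : ℤ) ≠ 0 := by
  classical
  let Λ : (G → ℂ) →ₗ[ℂ] ℂ := ∑ L ∈ Icc a b, (mu ℤ a L : ℂ) • L.average
  have hΛ : ∀ V : FDRep ℂ G, Λ V.character =
      ((∑ L ∈ Icc a b, mu ℤ a L * (finrank ℂ (invariants (V.ρ.comp L.subtype)) : ℤ) : ℤ) : ℂ) := by
    intro V
    simp [Λ, average_character]
  have hregular : Λ (rightFDRep : FDRep ℂ G).character ≠ 0 := by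
    have hindex : ∀ L ∈ Icc a b, mu ℤ a L * (finrank ℂ
        (invariants ((rightFDRep : FDRep ℂ G).ρ.comp L.subtype)) : ℤ) =
          mu ℤ a L * (L.relIndex b : ℤ) * (b.index : ℤ) := fun L hL => by
      rw [finrank_invariants_rightFDRep, ← L.relIndex_mul_index (mem_Icc.1 hL).2, Nat.cast_mul,
        mul_assoc]
    rw [hΛ, sum_congr rfl hindex, ← sum_mul, Int.cast_ne_zero]
    exact mul_ne_zero hφ (Nat.cast_ne_zero.2 Subgroup.index_ne_zero_of_finite)
  obtain ⟨U, hU, hΛU⟩ := exists_simple_apply_character_ne_zero Λ.toAddMonoidHom _ hregular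
  exact ⟨U, hU, fun h => hΛU (by simp [hΛ, h])⟩

theorem FDRep.sum_mu_mul_finrank_invariants_eq_zero {k : Type*} [Field k] (U : FDRep k G)
    {a b M : Subgroup G} (hM_ker : M ≤ U.ρ.ker) (hMa : ¬ M ≤ a) (hMb : M ≤ b) :
    ∑ L ∈ Icc a b, mu ℤ a L * (finrank k (invariants (U.ρ.comp L.subtype)) : ℤ) = 0 :=
  sum_mu_mul_eq_zero_of_apply_sup_eq hMa hMb fun L => by
    rw [invariants_comp_sup_subtype _ L hM_ker]

end SubgroupInterval

open scoped Classical in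
theorem stmt18_general {G : Type} [Group G] [Fintype G]
    (μ : Subgroup G → Subgroup G → ℤ)
    (hμ_self : ∀ K : Subgroup G, μ K K = 1)
    (hμ_lt : ∀ K K' : Subgroup G, K < K' →
      μ K K' = -∑ L ∈ Finset.univ.filter (fun L : Subgroup G => K < L ∧ L ≤ K'), μ L K')
    (ℓ : ℕ) (H : Fin (ℓ + 1) → Subgroup G)
    (h0 : H 0 = ⊥) (hlast : H (Fin.last ℓ) = ⊤)
    (hphi : ∀ i : Fin ℓ,
      (∑ K ∈ Finset.univ.filter
          (fun K : Subgroup G => H i.castSucc ≤ K ∧ K ≤ H i.succ),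
        μ (H i.castSucc) K * (K.relIndex (H i.succ) : ℤ)) ≠ 0) :
    ∃ k : ℕ, k ≤ ℓ ∧ ∃ V : Fin k → FDRep ℂ G,
      (∀ i, CategoryTheory.Simple (V i)) ∧
      (∀ g : G, (∀ i, (V i).ρ g = 1) → g = 1) := by
  let : LocallyFiniteOrder (Subgroup G) := Fintype.toLocallyFiniteOrder
  have hμ : ∀ a b : Subgroup G, a ≤ b → μ a b = mu ℤ a b := fun a b =>
    eq_mu_of_eq_neg_sum_Ioc hμ_self fun a b hab => by
      rw [hμ_lt a b hab]
      congr 2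
      ext L
      simp
  have hφ : ∀ i : Fin ℓ, ∑ L ∈ Icc (H i.castSucc) (H i.succ),
      mu ℤ (H i.castSucc) L * (L.relIndex (H i.succ) : ℤ) ≠ 0 := fun i => by
    convert hphi i using 1
    refine sum_congr (by ext L; simp) fun L hL => ?_
    rw [hμ _ _ (mem_filter.1 hL).2.1]
  choose U hU_simple hU_ne using fun i =>
    FDRep.exists_simple_sum_mu_mul_finrank_invariants_ne_zero (hφ i)
  refine ⟨ℓ, le_rfl, U, hU_simple, fun g hg => ?_⟩
  by_contra hg1
  set N := ⨅ i, (U i).ρ.ker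
  have hN : N ≠ ⊥ := fun h => hg1 (Subgroup.mem_bot.1 (h ▸ Subgroup.mem_iInf.2 hg))
  obtain ⟨i, hi_bot, hi_ne_bot⟩ := Fin.exists_castSucc_and_not_succ (P := fun j => N ⊓ H j = ⊥)
    (by rw [h0, inf_bot_eq]) (by rwa [hlast, inf_top_eq])
  exact hU_ne i (FDRep.sum_mu_mul_finrank_invariants_eq_zero (U i) (M := N ⊓ H i.succ)
    (inf_le_left.trans (iInf_le _ i))
    (fun h => hi_ne_bot (le_bot_iff.1 (hi_bot ▸ le_inf inf_le_left h))) inf_le_right)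

open scoped Classical in
/-- The minimal number of irreducible components of a faithful complex
representation of a finite group `G` is at most the minimal length `ℓ` of a
chain `1 = H₀ < H₁ < ... < H_ℓ = G` with each dual Euler totient
`φ̂(Hᵢ, Hᵢ₊₁) = ∑_{K ∈ [Hᵢ,Hᵢ₊₁]} μ(Hᵢ,K)·|Hᵢ₊₁:K|` nonzero: for any such
chain there is a faithful representation which is a direct sum of at most `ℓ`
irreducibles. -/
theorem stmt18 {G : Type} [Group G] [Fintype G]
    (μ : Subgroup G → Subgroup G → ℤ)
    (hμ_self : ∀ K : Subgroup G, μ K K = 1)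
    (hμ_lt : ∀ K K' : Subgroup G, K < K' →
      μ K K' = -∑ L ∈ Finset.univ.filter (fun L : Subgroup G => K < L ∧ L ≤ K'), μ L K')
    (ℓ : ℕ) (H : Fin (ℓ + 1) → Subgroup G)
    (h0 : H 0 = ⊥) (hlast : H (Fin.last ℓ) = ⊤)
    (hchain : ∀ i : Fin ℓ, H i.castSucc < H i.succ)
    (hphi : ∀ i : Fin ℓ,
      (∑ K ∈ Finset.univ.filter
          (fun K : Subgroup G => H i.castSucc ≤ K ∧ K ≤ H i.succ),
        μ (H i.castSucc) K * (K.relIndex (H i.succ) : ℤ)) ≠ 0) :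
    ∃ k : ℕ, k ≤ ℓ ∧ ∃ V : Fin k → FDRep ℂ G,
      (∀ i, CategoryTheory.Simple (V i)) ∧
      (∀ g : G, (∀ i, (V i).ρ g = 1) → g = 1) :=
  stmt18_general μ hμ_self hμ_lt ℓ H h0 hlast hphi
end
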